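/- arXiv:2506.22294 — 11 statements merged into one kernel-verified Lean document; each statement's English description precedes it below -/
import Mathlib

section
/- Let {M₁, M₂} be a two-outcome POVM in dimension 2 with Matrix.trace M₁ ≤ Matrix.trace M₂. Then for every unit vector φ ∈ ℂ², there exists a valid decomposition K of {M₁,M₂} whose objective at φ satisfies ∑_j ⟪φ, (K j j)·φ⟫ ≥ 1 − tr M₁ + (1/2)·(tr √M₁)². (Hence P_guess(φ, {M₁,M₂}) ≥ 1 − tr M₁ + (1/2)·(tr √M₁)² for every unit φ.) -/
open Matrix ComplexOrder

noncomputable section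

/-- The positive semidefinite square root, as `Matrix.PosSemidef.sqrt` was defined in Mathlib
(December 2024); removed from Mathlib since. -/
def Matrix.PosSemidef.sqrt {n 𝕜 : Type*} [Fintype n] [DecidableEq n] [RCLike 𝕜]
    {A : Matrix n n 𝕜} (hA : A.PosSemidef) : Matrix n n 𝕜 :=
  (hA.1.eigenvectorUnitary : Matrix n n 𝕜) *
    diagonal (fun i => ((Real.sqrt (hA.1.eigenvalues i) : ℝ) : 𝕜)) *
    (star hA.1.eigenvectorUnitary : Matrix n n 𝕜)

/-- `K` is a valid decomposition of the POVM `M`. -/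
def IsDecomp {m d : ℕ} (M : Fin m → Matrix (Fin d) (Fin d) ℂ)
    (K : Fin m → Fin m → Matrix (Fin d) (Fin d) ℂ) : Prop :=
  (∀ x j, (K x j).PosSemidef) ∧
  (∀ j, (d : ℂ) • ∑ x, K x j = (∑ x, (K x j).trace) • (1 : Matrix (Fin d) (Fin d) ℂ)) ∧
  (∀ x, ∑ j, K x j = M x)

/-- Eve's objective for the decomposition `K` and the state `φ`:
`∑_j ⟪φ, (K j j) φ⟫`. -/
def objective {m d : ℕ} (K : Fin m → Fin m → Matrix (Fin d) (Fin d) ℂ)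
    (φ : Fin d → ℂ) : ℝ :=
  ∑ j, (star φ ⬝ᵥ (K j j).mulVec φ).re

/-!
Take `A = √M₀` and a unit vector `ψ ⊥ φ`, so that `φφ* + ψψ* = 1` and
`M₀ = A (φφ* + ψψ*) A = ww* + w'w'*` with `w = Aφ`, `w' = Aψ`. Put `ww*` and `w'w'*` in the
first row of `K` and complete each column to a multiple of the identity in the second row:
`‖w‖² • 1 - ww*` and `(1 - ‖w‖²) • 1 - w'w'*`, which are positive semidefinite by
Cauchy–Schwarz, the second one because `‖w‖² + ‖w'‖² = tr M₀ ≤ 1`. With `z = ⟪φ, Aφ⟫`, `z' = ⟪ψ, Aψ⟫`, `x = ⟪φ, Aψ⟫` the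
entries of the Hermitian `A` in the basis `φ, ψ`, the objective is `1 - 2|x|²`, while
`1 - tr M₀ + (tr A)² / 2 = 1 - 2|x|² - (z - z')² / 2`.
-/

namespace Matrix

section Sqrt

variable {n 𝕜 : Type*} [Fintype n] [DecidableEq n] [RCLike 𝕜] {A : Matrix n n 𝕜}

theorem PosSemidef.posSemidef_sqrt (hA : A.PosSemidef) : hA.sqrt.PosSemidef := by
  simpa [PosSemidef.sqrt, star_eq_conjTranspose] using
    (PosSemidef.diagonal fun i => RCLike.ofReal_nonneg.mpr (Real.sqrt_nonneg (hA.1.eigenvalues i))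
      ).mul_mul_conjTranspose_same (hA.1.eigenvectorUnitary : Matrix n n 𝕜)

theorem PosSemidef.sqrt_mul_self (hA : A.PosSemidef) : hA.sqrt * hA.sqrt = A := by
  set U : Matrix n n 𝕜 := (hA.1.eigenvectorUnitary : Matrix n n 𝕜)
  have hU : star U * U = 1 := Unitary.star_mul_self_of_mem hA.1.eigenvectorUnitary.2
  have hsq : diagonal (fun i => ((√(hA.1.eigenvalues i) : ℝ) : 𝕜)) *
      diagonal (fun i => ((√(hA.1.eigenvalues i) : ℝ) : 𝕜)) =
      diagonal (RCLike.ofReal ∘ hA.1.eigenvalues) := by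
    rw [diagonal_mul_diagonal]
    congr 1
    funext i
    rw [← RCLike.ofReal_mul, Real.mul_self_sqrt (hA.eigenvalues_nonneg i), Function.comp_apply]
  conv_rhs => rw [hA.1.spectral_theorem, Unitary.conjStarAlgAut_apply]
  simp only [PosSemidef.sqrt, Matrix.mul_assoc]
  rw [← Matrix.mul_assoc (star U) U, hU, Matrix.one_mul, ← Matrix.mul_assoc _ _ (star U), hsq]

end Sqrt

section OuterProduct

variable {n : Type*} [Fintype n]

theorem star_dotProduct_vecMulVec_mulVec (v w : n → ℂ) :
    star v ⬝ᵥ vecMulVec w (star w) *ᵥ v = Complex.normSq (star v ⬝ᵥ w) := by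
  rw [vecMulVec_mulVec, op_smul_eq_smul, dotProduct_smul, smul_eq_mul, star_dotProduct w v,
    Complex.star_def, Complex.conj_mul', Complex.normSq_eq_norm_sq, Complex.ofReal_pow]

theorem normSq_star_dotProduct_le (u v : n → ℂ) :
    (Complex.normSq (star u ⬝ᵥ v) : ℂ) ≤ (star u ⬝ᵥ u) * (star v ⬝ᵥ v) := by
  have hinner : ∀ x y : n → ℂ, star x ⬝ᵥ y = inner ℂ (WithLp.toLp 2 x) (WithLp.toLp 2 y) :=
    fun x y => by rw [EuclideanSpace.inner_toLp_toLp, dotProduct_comm]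
  have h := Complex.real_le_real.mpr <| pow_le_pow_left₀ (norm_nonneg _)
    (norm_inner_le_norm (𝕜 := ℂ) (WithLp.toLp 2 u) (WithLp.toLp 2 v)) 2
  rw [hinner, hinner, hinner, inner_self_eq_norm_sq_to_K, inner_self_eq_norm_sq_to_K,
    Complex.normSq_eq_norm_sq]
  simpa [mul_pow] using h

theorem posSemidef_smul_one_sub_vecMulVec [DecidableEq n] {w : n → ℂ} {c : ℂ}
    (hc : star w ⬝ᵥ w ≤ c) : (c • 1 - vecMulVec w (star w)).PosSemidef := by
  have hc_real : star c = c := by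
    rw [Complex.star_def, Complex.conj_eq_iff_im, ← (Complex.le_def.mp hc).2]
    exact (Complex.le_def.mp (dotProduct_star_self_nonneg w)).2.symm
  refine PosSemidef.of_dotProduct_mulVec_nonneg ?_ fun x => ?_
  · simp [IsHermitian, conjTranspose_sub, hc_real, (posSemidef_vecMulVec_self_star w).1.eq]
  rw [sub_mulVec, dotProduct_sub, smul_mulVec, one_mulVec, dotProduct_smul, smul_eq_mul,
    star_dotProduct_vecMulVec_mulVec, sub_nonneg]
  calc (Complex.normSq (star x ⬝ᵥ w) : ℂ) ≤ (star x ⬝ᵥ x) * (star w ⬝ᵥ w) :=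
        normSq_star_dotProduct_le x w
    _ ≤ (star x ⬝ᵥ x) * c := mul_le_mul_of_nonneg_left hc (dotProduct_star_self_nonneg x)
    _ = c * (star x ⬝ᵥ x) := mul_comm _ _

end OuterProduct

section Resolution

variable {n : Type*} [Fintype n] [DecidableEq n] {φ ψ : n → ℂ}

theorem dotProduct_star_self_eq_of_resolution
    (hres : vecMulVec φ (star φ) + vecMulVec ψ (star ψ) = 1) (v : n → ℂ) :
    star v ⬝ᵥ v = Complex.normSq (star v ⬝ᵥ φ) + Complex.normSq (star v ⬝ᵥ ψ) := by
  calc star v ⬝ᵥ v = star v ⬝ᵥ (vecMulVec φ (star φ) + vecMulVec ψ (star ψ)) *ᵥ v := by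
        rw [hres, one_mulVec]
    _ = _ := by
      rw [add_mulVec, dotProduct_add, star_dotProduct_vecMulVec_mulVec,
        star_dotProduct_vecMulVec_mulVec]

theorem trace_eq_of_resolution (hres : vecMulVec φ (star φ) + vecMulVec ψ (star ψ) = 1)
    (A : Matrix n n ℂ) : A.trace = star φ ⬝ᵥ A *ᵥ φ + star ψ ⬝ᵥ A *ᵥ ψ := by
  conv_lhs => rw [← mul_one A, ← hres]
  rw [mul_add, mul_vecMulVec, mul_vecMulVec, trace_add, trace_vecMulVec, trace_vecMulVec,
    dotProduct_comm (A *ᵥ φ), dotProduct_comm (A *ᵥ ψ)]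

theorem mul_conjTranspose_eq_of_resolution
    (hres : vecMulVec φ (star φ) + vecMulVec ψ (star ψ) = 1) (A : Matrix n n ℂ) :
    A * Aᴴ = vecMulVec (A *ᵥ φ) (star (A *ᵥ φ)) + vecMulVec (A *ᵥ ψ) (star (A *ᵥ ψ)) := by
  rw [star_mulVec, star_mulVec, ← vecMulVec_mul, ← vecMulVec_mul, ← mul_vecMulVec,
    ← mul_vecMulVec, ← add_mul, ← mul_add, hres, mul_one]

end Resolution

end Matrix

section TwoOutcome

variable {d : ℕ}

def twoOutcomeDecomp (w w' : Fin d → ℂ) : Fin 2 → Fin 2 → Matrix (Fin d) (Fin d) ℂ :=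
  ![![vecMulVec w (star w), vecMulVec w' (star w')],
    ![(star w ⬝ᵥ w) • 1 - vecMulVec w (star w), (1 - star w ⬝ᵥ w) • 1 - vecMulVec w' (star w')]]

theorem isDecomp_twoOutcomeDecomp {M : Fin 2 → Matrix (Fin d) (Fin d) ℂ} {w w' : Fin d → ℂ}
    (hM₀ : vecMulVec w (star w) + vecMulVec w' (star w') = M 0) (hM : M 0 + M 1 = 1)
    (htr : (M 0).trace ≤ 1) : IsDecomp M (twoOutcomeDecomp w w') := by
  have hw' : star w' ⬝ᵥ w' ≤ 1 - star w ⬝ᵥ w := by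
    rw [← hM₀, trace_add, trace_vecMulVec, trace_vecMulVec, dotProduct_comm w,
      dotProduct_comm w'] at htr
    exact le_sub_iff_add_le'.mpr htr
  have hcol : ∀ (c : ℂ) (v : Fin d → ℂ),
      (d : ℂ) • (vecMulVec v (star v) + (c • 1 - vecMulVec v (star v))) =
        (trace (vecMulVec v (star v)) + trace (c • 1 - vecMulVec v (star v))) • 1 := by
    intro c v
    rw [← trace_add, add_sub_cancel, trace_smul, trace_one, Fintype.card_fin, smul_smul,
      smul_eq_mul, mul_comm]
  refine ⟨Fin.forall_fin_two.mpr ⟨Fin.forall_fin_two.mpr ⟨?_, ?_⟩, Fin.forall_fin_two.mpr ⟨?_, ?_⟩⟩,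
    Fin.forall_fin_two.mpr ⟨?_, ?_⟩, Fin.forall_fin_two.mpr ⟨?_, ?_⟩⟩
  · exact posSemidef_vecMulVec_self_star w
  · exact posSemidef_vecMulVec_self_star w'
  · exact posSemidef_smul_one_sub_vecMulVec le_rfl
  · exact posSemidef_smul_one_sub_vecMulVec hw'
  · simpa [Fin.sum_univ_two, twoOutcomeDecomp] using hcol _ w
  · simpa [Fin.sum_univ_two, twoOutcomeDecomp] using hcol _ w'
  · simpa [Fin.sum_univ_two, twoOutcomeDecomp] using hM₀
  · rw [eq_sub_of_add_eq' hM, ← hM₀]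
    simp only [Fin.sum_univ_two, twoOutcomeDecomp, cons_val_one, cons_val_zero,
      sub_smul, one_smul]
    abel

theorem objective_twoOutcomeDecomp (w w' : Fin d → ℂ) {φ : Fin d → ℂ} (hφ : star φ ⬝ᵥ φ = 1) :
    objective (twoOutcomeDecomp w w') φ =
      Complex.normSq (star φ ⬝ᵥ w) + (1 - (star w ⬝ᵥ w).re) - Complex.normSq (star φ ⬝ᵥ w') := by
  simp only [objective, Fin.sum_univ_two, twoOutcomeDecomp, Fin.isValue, cons_val', cons_val_zero, cons_val_fin_one, cons_val_one,
    star_dotProduct_vecMulVec_mulVec, Complex.ofReal_re, sub_mulVec, smul_mulVec, one_mulVec,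
    dotProduct_sub, dotProduct_smul, hφ, smul_eq_mul, mul_one, Complex.sub_re, Complex.one_re]
  ring

end TwoOutcome

def qubitPerp (φ : Fin 2 → ℂ) : Fin 2 → ℂ := ![-star (φ 1), star (φ 0)]

theorem vecMulVec_add_vecMulVec_qubitPerp (φ : Fin 2 → ℂ) :
    vecMulVec φ (star φ) + vecMulVec (qubitPerp φ) (star (qubitPerp φ)) = (star φ ⬝ᵥ φ) • 1 := by
  ext i j
  fin_cases i <;> fin_cases j <;>
    simp [-cons_vecMulVec, qubitPerp, vecMulVec_apply, dotProduct, Fin.sum_univ_two] <;> ring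

theorem le_objective_twoOutcomeDecomp {d : ℕ} {A : Matrix (Fin d) (Fin d) ℂ} (hA : A.IsHermitian)
    {φ ψ : Fin d → ℂ} (hres : vecMulVec φ (star φ) + vecMulVec ψ (star ψ) = 1)
    (hφ : star φ ⬝ᵥ φ = 1) :
    1 - (A * A).trace.re + 1 / 2 * A.trace.re ^ 2 ≤
      objective (twoOutcomeDecomp (A *ᵥ φ) (A *ᵥ ψ)) φ := by
  have hadj : ∀ u v, star (A *ᵥ u) ⬝ᵥ v = star u ⬝ᵥ A *ᵥ v := fun u v => by
    rw [star_mulVec, hA.eq, dotProduct_mulVec]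
  have hnorm : ∀ u, star (A *ᵥ u) ⬝ᵥ A *ᵥ u =
      Complex.normSq (star u ⬝ᵥ A *ᵥ φ) + Complex.normSq (star u ⬝ᵥ A *ᵥ ψ) := fun u => by
    rw [dotProduct_star_self_eq_of_resolution hres, hadj, hadj]
  have hψφ : Complex.normSq (star ψ ⬝ᵥ A *ᵥ φ) = Complex.normSq (star φ ⬝ᵥ A *ᵥ ψ) := by
    rw [← hadj, star_dotProduct, Complex.star_def, Complex.normSq_conj]
  have htrAA : (A * A).trace = star (A *ᵥ φ) ⬝ᵥ A *ᵥ φ + star (A *ᵥ ψ) ⬝ᵥ A *ᵥ ψ := by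
    nth_rewrite 2 [← hA.eq]
    rw [mul_conjTranspose_eq_of_resolution hres, trace_add, trace_vecMulVec, trace_vecMulVec,
      dotProduct_comm (A *ᵥ φ), dotProduct_comm (A *ᵥ ψ)]
  have hz : (star φ ⬝ᵥ A *ᵥ φ).im = 0 := hA.im_star_dotProduct_mulVec_self φ
  have hz' : (star ψ ⬝ᵥ A *ᵥ ψ).im = 0 := hA.im_star_dotProduct_mulVec_self ψ
  rw [objective_twoOutcomeDecomp _ _ hφ, htrAA, trace_eq_of_resolution hres A, hnorm, hnorm, hψφ]
  simp only [Complex.add_re, Complex.ofReal_re, Complex.normSq_apply, hz, hz']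
  nlinarith [sq_nonneg ((star φ ⬝ᵥ A *ᵥ φ).re - (star ψ ⬝ᵥ A *ᵥ ψ).re)]

theorem trace_le_one_of_add_eq_one {M₀ M₁ : Matrix (Fin 2) (Fin 2) ℂ} (h₀ : M₀.PosSemidef)
    (hM : M₀ + M₁ = 1) (htr : M₀.trace.re ≤ M₁.trace.re) : M₀.trace ≤ 1 := by
  have hsum : M₀.trace + M₁.trace = 2 := by
    rw [← trace_add, hM, trace_one, Fintype.card_fin, Nat.cast_ofNat]
  have him : M₀.trace.im = 0 := (Complex.le_def.mp h₀.trace_nonneg).2.symm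
  have hre := congrArg Complex.re hsum
  simp only [Complex.add_re, Complex.re_ofNat] at hre
  exact Complex.le_def.mpr ⟨by rw [Complex.one_re]; linarith, by rw [him, Complex.one_im]⟩

/-- **Lemma 1** (lower bound): for any two-outcome qubit POVM with `tr M₁ ≤ tr M₂` and any
unit state `φ`, there is a valid decomposition whose objective at `φ` is at least
`1 − tr M₁ + (1/2)·(tr √M₁)²`. -/
theorem pguess_qubit_two_outcome_lower_bound
    (M : Fin 2 → Matrix (Fin 2) (Fin 2) ℂ)
    (hpsd : ∀ x, (M x).PosSemidef) (hsum : ∑ x, M x = 1)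
    (htr : (M 0).trace.re ≤ (M 1).trace.re)
    (φ : Fin 2 → ℂ) (hφ : star φ ⬝ᵥ φ = 1) :
    ∃ K : Fin 2 → Fin 2 → Matrix (Fin 2) (Fin 2) ℂ, IsDecomp M K ∧
      1 - (M 0).trace.re + (1 / 2) * ((hpsd 0).sqrt.trace.re) ^ 2 ≤ objective K φ := by
  set A := (hpsd 0).sqrt
  have hA : A.IsHermitian := (hpsd 0).posSemidef_sqrt.1
  have hAA : A * A = M 0 := (hpsd 0).sqrt_mul_self
  have hM : M 0 + M 1 = 1 := by rwa [Fin.sum_univ_two] at hsum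
  have hres : vecMulVec φ (star φ) + vecMulVec (qubitPerp φ) (star (qubitPerp φ)) = 1 := by
    rw [vecMulVec_add_vecMulVec_qubitPerp, hφ, one_smul]
  have hM₀ : vecMulVec (A *ᵥ φ) (star (A *ᵥ φ)) +
      vecMulVec (A *ᵥ qubitPerp φ) (star (A *ᵥ qubitPerp φ)) = M 0 := by
    rw [← mul_conjTranspose_eq_of_resolution hres, hA.eq, hAA]
  refine ⟨twoOutcomeDecomp (A *ᵥ φ) (A *ᵥ qubitPerp φ),
    isDecomp_twoOutcomeDecomp hM₀ hM (trace_le_one_of_add_eq_one (hpsd 0) hM htr), ?_⟩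
  rw [← hAA]
  exact le_objective_twoOutcomeDecomp hA hres hφ
end
end

section
/- Let {M₁, M₂} be a two-outcome POVM in dimension d such that λmin(M₁) + λmax(M₁) ≤ λmin(M₂) + λmax(M₂), where λmin(·) and λmax(·) denote the smallest and largest eigenvalues of a Hermitian matrix. Then P*_guess({M₁,M₂}) ≤ 1 − (1/2)·(√(λmax(M₁)) − √(λmin(M₁)))²; that is, there exists a unit vector φ ∈ ℂ^d such that every valid decomposition K of {M₁,M₂} satisfies ∑_j ⟪φ, (K j j)·φ⟫ ≤ 1 − (1/2)·(√(λmax(M₁)) − √(λmin(M₁)))². -/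
/-!
Let `u`, `v` be orthonormal eigenvectors of `M 0` for `a = λmin` and `b = λmax`, and take
`φ = (u + v)/√2`. The trace condition makes every column of a valid decomposition a scalar,
`K 0 j + K 1 j = c j • 1` with `c 0 + c 1 = 1`, so `K 1 1 = c 1 • 1 - M 0 + K 0 0` and the
objective at `φ` is `c 1 - (a + b)/2 + 2⟪φ, K 0 0 φ⟫`. Write `p, q, r` for the real parts of
`⟪u, K 0 0 u⟫, ⟪v, K 0 0 v⟫, ⟪u, K 0 0 v⟫`. Cauchy–Schwarz for the positive semidefinite matrices
`K 0 0`, `M 0 - K 0 0 = K 0 1` and `c 0 • 1 - K 0 0 = K 1 0` on `u, v` gives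
`r² ≤ pq`, `r² ≤ (a - p)(b - q)` and `r² ≤ (c 0 - p)(c 0 - q)`, which together force
`p + q + 2r ≤ c 0 + √(ab)`. When `a = b`, any unit eigenvector works: the objective of a unit
vector is at most `∑ j, c j = 1`.
-/

open Matrix ComplexOrder

noncomputable section

namespace Matrix

variable {n : Type*} [Fintype n]

theorem IsHermitian.re_star_dotProduct_mulVec_comm {X : Matrix n n ℂ} (hX : X.IsHermitian)
    (x y : n → ℂ) : (star y ⬝ᵥ X *ᵥ x).re = (star x ⬝ᵥ X *ᵥ y).re := by
  rw [star_dotProduct, star_mulVec, hX.eq, ← dotProduct_mulVec, Complex.star_def,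
    Complex.conj_re]

theorem IsHermitian.re_star_dotProduct_mulVec_smul_add_smul {X : Matrix n n ℂ}
    (hX : X.IsHermitian) (x y : n → ℂ) (s t : ℝ) :
    (star (s • x + t • y) ⬝ᵥ X *ᵥ (s • x + t • y)).re
      = s ^ 2 * (star x ⬝ᵥ X *ᵥ x).re + 2 * s * t * (star x ⬝ᵥ X *ᵥ y).re
        + t ^ 2 * (star y ⬝ᵥ X *ᵥ y).re := by
  have hyx := hX.re_star_dotProduct_mulVec_comm x y
  simp only [star_add, star_smul, star_trivial, mulVec_add, mulVec_smul, dotProduct_add,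
    add_dotProduct, smul_dotProduct, dotProduct_smul, Complex.add_re, Complex.real_smul,
    Complex.re_ofReal_mul] at hyx ⊢
  rw [hyx]
  ring

theorem PosSemidef.re_star_dotProduct_mulVec_sq_le {X : Matrix n n ℂ} (hX : X.PosSemidef)
    (x y : n → ℂ) :
    (star x ⬝ᵥ X *ᵥ y).re ^ 2 ≤ (star x ⬝ᵥ X *ᵥ x).re * (star y ⬝ᵥ X *ᵥ y).re := by
  have hdiscr := discrim_le_zero (a := (star x ⬝ᵥ X *ᵥ x).re)
    (b := 2 * (star x ⬝ᵥ X *ᵥ y).re) (c := (star y ⬝ᵥ X *ᵥ y).re) fun t => by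
      have : 0 ≤ (star (t • x + (1 : ℝ) • y) ⬝ᵥ X *ᵥ (t • x + (1 : ℝ) • y)).re :=
        hX.re_dotProduct_nonneg _
      rw [hX.isHermitian.re_star_dotProduct_mulVec_smul_add_smul] at this
      linear_combination this
  rw [discrim] at hdiscr
  linarith

theorem re_star_dotProduct_mulVec_of_mulVec_eq_smul {X : Matrix n n ℂ} {y : n → ℂ} {μ : ℝ}
    (h : X *ᵥ y = μ • y) (x : n → ℂ) :
    (star x ⬝ᵥ X *ᵥ y).re = μ * (star x ⬝ᵥ y).re := by
  rw [h, dotProduct_smul, Complex.real_smul, Complex.re_ofReal_mul]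

theorem ofReal_smul_one_mulVec [DecidableEq n] (c : ℝ) (y : n → ℂ) :
    ((c : ℂ) • (1 : Matrix n n ℂ)) *ᵥ y = c • y := by
  rw [smul_mulVec, one_mulVec, Complex.coe_smul]

theorem re_star_dotProduct_mulVec_bounds_of_posSemidef_sub {Y T : Matrix n n ℂ}
    (h : (Y - T).PosSemidef) {x y : n → ℂ} {α β : ℝ} (hxx : star x ⬝ᵥ x = 1)
    (hyy : star y ⬝ᵥ y = 1) (hxy : star x ⬝ᵥ y = 0) (hx : Y *ᵥ x = α • x)
    (hy : Y *ᵥ y = β • y) :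
    (star x ⬝ᵥ T *ᵥ x).re ≤ α ∧ (star y ⬝ᵥ T *ᵥ y).re ≤ β ∧
      (star x ⬝ᵥ T *ᵥ y).re ^ 2
        ≤ (α - (star x ⬝ᵥ T *ᵥ x).re) * (β - (star y ⬝ᵥ T *ᵥ y).re) := by
  have hxx' := h.re_dotProduct_nonneg x
  have hyy' := h.re_dotProduct_nonneg y
  have hxy' := h.re_star_dotProduct_mulVec_sq_le x y
  simp only [RCLike.re_to_complex, sub_mulVec, dotProduct_sub, Complex.sub_re,
    re_star_dotProduct_mulVec_of_mulVec_eq_smul hx, re_star_dotProduct_mulVec_of_mulVec_eq_smul hy,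
    hxx, hyy, hxy, Complex.one_re, Complex.zero_re, mul_one, mul_zero, zero_sub, neg_sq]
    at hxx' hyy' hxy'
  exact ⟨by linarith, by linarith, hxy'⟩

theorem star_dotProduct_inv_sqrt_two_smul_add {u v : n → ℂ} (huu : star u ⬝ᵥ u = 1)
    (hvv : star v ⬝ᵥ v = 1) (huv : star u ⬝ᵥ v = 0) :
    star ((√2)⁻¹ • (u + v)) ⬝ᵥ ((√2)⁻¹ • (u + v)) = 1 := by
  have hvu : star v ⬝ᵥ u = 0 := by rw [star_dotProduct, huv, star_zero]
  simp only [star_smul, star_trivial, star_add, smul_dotProduct, dotProduct_smul, dotProduct_add,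
    add_dotProduct, huu, hvv, huv, hvu, Complex.real_smul, Complex.ofReal_inv]
  have h2 : ((√2 : ℝ) : ℂ) ^ 2 = 2 := by
    rw [← Complex.ofReal_pow, Real.sq_sqrt zero_le_two, Complex.ofReal_ofNat]
  have h0 : ((√2 : ℝ) : ℂ) ≠ 0 := by simp
  field_simp
  linear_combination -h2

theorem IsHermitian.star_eigenvectorBasis_dotProduct [DecidableEq n] {A : Matrix n n ℂ}
    (hA : A.IsHermitian) (i j : n) :
    star ⇑(hA.eigenvectorBasis i) ⬝ᵥ ⇑(hA.eigenvectorBasis j) = if i = j then 1 else 0 := by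
  rw [dotProduct_comm, ← EuclideanSpace.inner_eq_star_dotProduct]
  exact orthonormal_iff_ite.mp hA.eigenvectorBasis.orthonormal i j

end Matrix

theorem Real.mul_add_mul_le_sqrt_mul {p q r s : ℝ} (hp : 0 ≤ p) (hq : 0 ≤ q) (hr : 0 ≤ r)
    (hs : 0 ≤ s) : p * q + r * s ≤ √((p ^ 2 + r ^ 2) * (q ^ 2 + s ^ 2)) :=
  (Real.le_sqrt (by positivity) (by positivity)).mpr <| by
    nlinarith [sq_nonneg (p * s - r * q)]

theorem add_add_two_mul_le_add_sqrt_mul {a b c p q r : ℝ} (hp : 0 ≤ p) (hq : 0 ≤ q)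
    (hpa : p ≤ a) (hqb : q ≤ b) (hpc : p ≤ c) (hqc : q ≤ c)
    (h₀ : r ^ 2 ≤ p * q) (h₁ : r ^ 2 ≤ (a - p) * (b - q)) (h₂ : r ^ 2 ≤ (c - p) * (c - q)) :
    p + q + 2 * r ≤ c + √(a * b) := by
  have hα : r ≤ √p * √q := by
    rw [← Real.sqrt_mul hp]
    exact (le_abs_self r).trans (Real.abs_le_sqrt h₀)
  have hβ : r ≤ √(a - p) * √(b - q) := by
    rw [← Real.sqrt_mul (sub_nonneg.mpr hpa)]
    exact (le_abs_self r).trans (Real.abs_le_sqrt h₁)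
  set s := √(a * b)
  set α := √p * √q
  set β := √(a - p) * √(b - q)
  have hαβ : α + β ≤ s := by
    have := Real.mul_add_mul_le_sqrt_mul (Real.sqrt_nonneg p) (Real.sqrt_nonneg q)
      (Real.sqrt_nonneg (a - p)) (Real.sqrt_nonneg (b - q))
    rwa [Real.sq_sqrt hp, Real.sq_sqrt hq, Real.sq_sqrt (sub_nonneg.mpr hpa),
      Real.sq_sqrt (sub_nonneg.mpr hqb), add_sub_cancel, add_sub_cancel] at this
  rcases le_or_gt c s with hcs | hsc
  · have : 2 * r ≤ (c - p) + (c - q) :=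
      le_of_sq_le_sq (by nlinarith [sq_nonneg ((c - p) - (c - q))]) (by linarith)
    linarith
  · have hc : 0 < c := (Real.sqrt_nonneg _).trans_lt hsc
    have hα2 : α ^ 2 = p * q := by rw [mul_pow, Real.sq_sqrt hp, Real.sq_sqrt hq]
    have hαr : (α - r) * (α + r) ≤ (s - 2 * r) * c :=
      calc (α - r) * (α + r) ≤ (α - r) * c :=
            mul_le_mul_of_nonneg_left (by linarith) (by linarith)
        _ ≤ (s - 2 * r) * c := mul_le_mul_of_nonneg_right (by linarith) hc.le
    have : c * (p + q + 2 * r) ≤ c * (c + s) := by nlinarith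
    exact le_of_mul_le_mul_left this hc

theorem IsDecomp.exists_sum_eq_smul_one {m d : ℕ} (hd : 0 < d)
    {M : Fin m → Matrix (Fin d) (Fin d) ℂ} {K : Fin m → Fin m → Matrix (Fin d) (Fin d) ℂ}
    (hK : IsDecomp M K) (hM : ∑ x, M x = 1) :
    ∃ c : Fin m → ℝ, (∀ j, ∑ x, K x j = (c j : ℂ) • 1) ∧ ∑ j, c j = 1 := by
  obtain ⟨hpsd, htr, hrow⟩ := hK
  have hd' : (d : ℂ) ≠ 0 := Nat.cast_ne_zero.mpr hd.ne'
  have hreal (j : Fin m) : ∑ x, (K x j).trace = ((∑ x, (K x j).trace).re : ℂ) :=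
    Complex.eq_re_of_ofReal_le (r := 0) <| by
      simpa using Finset.sum_nonneg fun x _ => (hpsd x j).trace_nonneg
  have hc (j : Fin m) : ∑ x, K x j = (((∑ x, (K x j).trace).re / d : ℝ) : ℂ) • 1 :=
    calc ∑ x, K x j = (d : ℂ)⁻¹ • ((d : ℂ) • ∑ x, K x j) := (inv_smul_smul₀ hd' _).symm
      _ = _ := by
        rw [htr j, smul_smul]
        push_cast
        rw [← hreal j, div_eq_inv_mul]
  refine ⟨_, hc, ?_⟩
  have hsum : ((∑ j, (∑ x, (K x j).trace).re / d : ℝ) : ℂ) • (1 : Matrix (Fin d) (Fin d) ℂ)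
      = 1 := by
    rw [Complex.ofReal_sum, Finset.sum_smul, ← Finset.sum_congr rfl fun j _ => hc j,
      Finset.sum_comm, ← hM]
    exact Finset.sum_congr rfl fun x _ => hrow x
  have h := congrFun₂ hsum ⟨0, hd⟩ ⟨0, hd⟩
  simp only [Matrix.smul_apply, one_apply_eq, smul_eq_mul, mul_one] at h
  exact_mod_cast h

theorem objective_le_sum_of_sum_eq_smul_one {m d : ℕ}
    {K : Fin m → Fin m → Matrix (Fin d) (Fin d) ℂ} (hK : ∀ x j, (K x j).PosSemidef)
    {c : Fin m → ℝ} (hc : ∀ j, ∑ x, K x j = (c j : ℂ) • 1) {φ : Fin d → ℂ}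
    (hφ : star φ ⬝ᵥ φ = 1) : objective K φ ≤ ∑ j, c j := by
  refine Finset.sum_le_sum fun j _ => ?_
  calc (star φ ⬝ᵥ (K j j) *ᵥ φ).re ≤ ∑ x, (star φ ⬝ᵥ (K x j) *ᵥ φ).re :=
        Finset.single_le_sum (fun x _ => (hK x j).re_dotProduct_nonneg φ) (Finset.mem_univ j)
    _ = c j := by
      rw [← Complex.re_sum, ← dotProduct_sum, ← sum_mulVec, hc,
        re_star_dotProduct_mulVec_of_mulVec_eq_smul (ofReal_smul_one_mulVec _ _), hφ,
        Complex.one_re, mul_one]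

theorem IsDecomp.objective_inv_sqrt_two_smul_add_le {d : ℕ}
    {M : Fin 2 → Matrix (Fin d) (Fin d) ℂ} {K : Fin 2 → Fin 2 → Matrix (Fin d) (Fin d) ℂ}
    (hK : IsDecomp M K) {c : Fin 2 → ℝ} (hc : ∀ j, ∑ x, K x j = (c j : ℂ) • 1)
    {u v : Fin d → ℂ} (huu : star u ⬝ᵥ u = 1) (hvv : star v ⬝ᵥ v = 1) (huv : star u ⬝ᵥ v = 0)
    {a b : ℝ} (hu : M 0 *ᵥ u = a • u) (hv : M 0 *ᵥ v = b • v) :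
    objective K ((√2)⁻¹ • (u + v)) ≤ c 0 + c 1 - (a + b) / 2 + √(a * b) := by
  obtain ⟨hpsd, -, hrow⟩ := hK
  have hK01 : K 0 1 = M 0 - K 0 0 := by
    rw [← hrow 0, Fin.sum_univ_two, add_sub_cancel_left]
  have hK10 : K 1 0 = (c 0 : ℂ) • 1 - K 0 0 := by
    rw [← hc 0, Fin.sum_univ_two, add_sub_cancel_left]
  have hK11 : K 1 1 = (c 1 : ℂ) • 1 - (M 0 - K 0 0) := by
    rw [← hc 1, ← hK01, Fin.sum_univ_two, add_sub_cancel_left]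
  have hK00 := hpsd 0 0
  obtain ⟨hua, hvb, hab⟩ := re_star_dotProduct_mulVec_bounds_of_posSemidef_sub
    (hK01 ▸ hpsd 0 1) huu hvv huv hu hv
  obtain ⟨huc, hvc, hcc⟩ := re_star_dotProduct_mulVec_bounds_of_posSemidef_sub
    (hK10 ▸ hpsd 1 0) huu hvv huv (ofReal_smul_one_mulVec _ _) (ofReal_smul_one_mulVec _ _)
  have key := add_add_two_mul_le_add_sqrt_mul (hK00.re_dotProduct_nonneg u)
    (hK00.re_dotProduct_nonneg v) hua hvb huc hvc (hK00.re_star_dotProduct_mulVec_sq_le u v)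
    hab hcc
  have hφ {X : Matrix (Fin d) (Fin d) ℂ} (hX : X.IsHermitian) :
      (star ((√2)⁻¹ • (u + v)) ⬝ᵥ X *ᵥ ((√2)⁻¹ • (u + v))).re
        = ((star u ⬝ᵥ X *ᵥ u).re + (star v ⬝ᵥ X *ᵥ v).re) / 2 + (star u ⬝ᵥ X *ᵥ v).re := by
    have hk : (√2)⁻¹ ^ 2 = (1 / 2 : ℝ) := by rw [inv_pow, Real.sq_sqrt zero_le_two, one_div]
    rw [smul_add, hX.re_star_dotProduct_mulVec_smul_add_smul]
    linear_combination ((star u ⬝ᵥ X *ᵥ u).re + 2 * (star u ⬝ᵥ X *ᵥ v).re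
      + (star v ⬝ᵥ X *ᵥ v).re) * hk
  rw [objective, Fin.sum_univ_two, hφ hK00.isHermitian, hφ (hpsd 1 1).isHermitian, hK11]
  simp only [RCLike.re_to_complex] at key
  simp only [sub_mulVec, dotProduct_sub, Complex.sub_re, ofReal_smul_one_mulVec, dotProduct_smul,
    Complex.real_smul, Complex.ofReal_re, re_star_dotProduct_mulVec_of_mulVec_eq_smul hu,
    re_star_dotProduct_mulVec_of_mulVec_eq_smul hv, huu, hvv, huv, Complex.one_re,
    Complex.zero_re, mul_one, mul_zero]
  linarith

theorem pguess_two_outcome_dim_d_upper_bound_general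
    {d : ℕ} (hd : 0 < d)
    (M : Fin 2 → Matrix (Fin d) (Fin d) ℂ)
    (hpsd : ∀ x, (M x).PosSemidef) (hsum : ∑ x, M x = 1) :
    ∃ φ : Fin d → ℂ, star φ ⬝ᵥ φ = 1 ∧
      ∀ K : Fin 2 → Fin 2 → Matrix (Fin d) (Fin d) ℂ, IsDecomp M K →
        objective K φ ≤ 1 - (1 / 2) *
          (Real.sqrt (⨆ i, (hpsd 0).isHermitian.eigenvalues i)
            - Real.sqrt (⨅ i, (hpsd 0).isHermitian.eigenvalues i)) ^ 2 := by
  have : Nonempty (Fin d) := ⟨⟨0, hd⟩⟩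
  set hA := (hpsd 0).isHermitian
  obtain ⟨i, hi⟩ := exists_eq_ciInf_of_finite (f := hA.eigenvalues)
  obtain ⟨j, hj⟩ := exists_eq_ciSup_of_finite (f := hA.eigenvalues)
  rw [← hi, ← hj]
  have hortho := hA.star_eigenvectorBasis_dotProduct
  have huu : star ⇑(hA.eigenvectorBasis i) ⬝ᵥ ⇑(hA.eigenvectorBasis i) = 1 := by
    simpa using hortho i i
  by_cases hij : i = j
  · subst hij
    refine ⟨hA.eigenvectorBasis i, huu, fun K hK => ?_⟩
    obtain ⟨c, hc, hc1⟩ := hK.exists_sum_eq_smul_one hd hsum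
    simpa [← hc1] using objective_le_sum_of_sum_eq_smul_one hK.1 hc huu
  have hvv : star ⇑(hA.eigenvectorBasis j) ⬝ᵥ ⇑(hA.eigenvectorBasis j) = 1 := by
    simpa using hortho j j
  have huv : star ⇑(hA.eigenvectorBasis i) ⬝ᵥ ⇑(hA.eigenvectorBasis j) = 0 := by
    simpa [hij] using hortho i j
  refine ⟨(√2)⁻¹ • (hA.eigenvectorBasis i + hA.eigenvectorBasis j),
    star_dotProduct_inv_sqrt_two_smul_add huu hvv huv, fun K hK => ?_⟩
  obtain ⟨c, hc, hc1⟩ := hK.exists_sum_eq_smul_one hd hsum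
  have hev := (hpsd 0).eigenvalues_nonneg
  calc objective K _
      ≤ c 0 + c 1 - (hA.eigenvalues i + hA.eigenvalues j) / 2
          + √(hA.eigenvalues i * hA.eigenvalues j) :=
        hK.objective_inv_sqrt_two_smul_add_le hc huu hvv huv
          (hA.mulVec_eigenvectorBasis i) (hA.mulVec_eigenvectorBasis j)
    _ = _ := by
      rw [← Fin.sum_univ_two, hc1, sub_sq, Real.sq_sqrt (hev i), Real.sq_sqrt (hev j),
        Real.sqrt_mul (hev i)]
      ring

/-- **Corollary 1**: for a two-outcome POVM in dimension `d` with
`λmin(M₁) + λmax(M₁) ≤ λmin(M₂) + λmax(M₂)`, there is a unit vector `φ` such that every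
valid decomposition has objective at most `1 − (1/2)(√λmax(M₁) − √λmin(M₁))²`. -/
theorem pguess_two_outcome_dim_d_upper_bound
    {d : ℕ} (hd : 0 < d)
    (M : Fin 2 → Matrix (Fin d) (Fin d) ℂ)
    (hpsd : ∀ x, (M x).PosSemidef) (hsum : ∑ x, M x = 1)
    (hord : (⨅ i, (hpsd 0).isHermitian.eigenvalues i) + (⨆ i, (hpsd 0).isHermitian.eigenvalues i)
      ≤ (⨅ i, (hpsd 1).isHermitian.eigenvalues i) + (⨆ i, (hpsd 1).isHermitian.eigenvalues i)) :
    ∃ φ : Fin d → ℂ, star φ ⬝ᵥ φ = 1 ∧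
      ∀ K : Fin 2 → Fin 2 → Matrix (Fin d) (Fin d) ℂ, IsDecomp M K →
        objective K φ ≤ 1 - (1 / 2) *
          (Real.sqrt (⨆ i, (hpsd 0).isHermitian.eigenvalues i)
            - Real.sqrt (⨅ i, (hpsd 0).isHermitian.eigenvalues i)) ^ 2 :=
  pguess_two_outcome_dim_d_upper_bound_general hd M hpsd hsum
end
end

section
/- Let M be an m-outcome POVM in dimension d, let Π be an orthogonal projection matrix (Π Hermitian with Π² = Π), and let K be a valid decomposition of M. Define K'_{x,j} = Π · K_{x,j} · Π. Then: each K'_{x,j} is positive semidefinite; for each j, (d : ℂ) • ∑_x K'_{x,j} = (∑_x Matrix.trace (K x j)) • Π; for each x, ∑_j K'_{x,j} = Π · M_x · Π; and for every unit vector φ with Π·φ = φ, the objective is preserved: ∑_j ⟪φ, (K' j j)·φ⟫ = ∑_j ⟪φ, (K j j)·φ⟫. -/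
open Matrix ComplexOrder

noncomputable section

/-- Compressing a valid decomposition by an orthogonal projection `P`: positivity and the
decomposition constraints are preserved (with `1` replaced by `P` and `M x` by `P M x P`),
and the objective is unchanged on states stabilized by `P`. -/
theorem decomposition_projection_compression
    {m d : ℕ}
    (M : Fin m → Matrix (Fin d) (Fin d) ℂ)
    (hpsd : ∀ x, (M x).PosSemidef) (hsum : ∑ x, M x = 1)
    (P : Matrix (Fin d) (Fin d) ℂ) (hP : P.IsHermitian) (hP2 : P * P = P)
    (K : Fin m → Fin m → Matrix (Fin d) (Fin d) ℂ) (hK : IsDecomp M K) :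
    (∀ x j, (P * K x j * P).PosSemidef) ∧
    (∀ j, (d : ℂ) • ∑ x, P * K x j * P = (∑ x, (K x j).trace) • P) ∧
    (∀ x, ∑ j, P * K x j * P = P * M x * P) ∧
    (∀ φ : Fin d → ℂ, star φ ⬝ᵥ φ = 1 → P.mulVec φ = φ →
      ∑ j, (star φ ⬝ᵥ (P * K j j * P).mulVec φ).re
        = ∑ j, (star φ ⬝ᵥ (K j j).mulVec φ).re) := by
  obtain ⟨hKpsd, hKmix, hKsum⟩ := hK
  refine ⟨?_, ?_, ?_, ?_⟩
  · intro x j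
    have := (hKpsd x j).mul_mul_conjTranspose_same P
    rwa [hP.eq] at this
  · intro j
    have h := hKmix j
    calc (d : ℂ) • ∑ x, P * K x j * P
        = P * ((d : ℂ) • ∑ x, K x j) * P := by
          rw [Matrix.mul_smul, Matrix.smul_mul, Finset.mul_sum, Finset.sum_mul]
      _ = (∑ x, (K x j).trace) • P := by
          rw [h, Matrix.mul_smul, Matrix.smul_mul, mul_one, hP2]
  · intro x
    rw [← hKsum x, Finset.mul_sum, Finset.sum_mul]
  · intro φ hφ hPφ
    refine Finset.sum_congr rfl fun j _ => ?_
    congr 1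
    have h1 : (P * K j j * P).mulVec φ = P.mulVec ((K j j).mulVec φ) := by
      rw [← Matrix.mulVec_mulVec, ← Matrix.mulVec_mulVec, hPφ]
    have h2 : Matrix.vecMul (star φ) P = star φ := by
      conv_lhs => rw [← hP.eq]
      rw [← Matrix.star_mulVec, hPφ]
    rw [h1, Matrix.dotProduct_mulVec, h2]
end
end

section
/- Let 0 < ε < 1 and d ≥ 2, and let M be the noisy projective measurement in dimension d. Then for every unit vector φ ∈ ℂ^d, ∑_x ⟪φ, √(M x)·φ⟫² ≥ (1/d)·(tr √(M 0))² = (1/d²)·(√(d−(d−1)ε) + (d−1)√ε)², and the inequality is strict whenever there exists x with |φ_x|² ≠ 1/d. -/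
/-!
With `p x = ‖φ x‖²`, a probability vector, the diagonal form of `√(M x)` gives
`y x := ⟪φ, √(M x) φ⟫ = b + (a - b) p x`, where `a = √((d - (d-1)ε)/d)` and `b = √(ε/d)`,
so `∑ x, y x = a + (d-1) b = tr √(M x)`. The decomposition `∑ y² = (∑ y)²/d + ∑ (y - mean)²`
gives the bound with defect `(a - b)² ∑ (p x - 1/d)²`, positive as soon as `p` is not
uniform, because `b < a` when `ε < 1`.
-/

open Matrix ComplexOrder

noncomputable section

/-- The noisy projective measurement in dimension `d` with noise parameter `ε`. -/
def noisyM (d : ℕ) (ε : ℝ) : Fin d → Matrix (Fin d) (Fin d) ℂ :=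
  fun x => ((1 - ε : ℝ) : ℂ) • Matrix.single x x 1 + ((ε / d : ℝ) : ℂ) • 1

/-- The positive semidefinite square root of `noisyM d ε x`. -/
def sqrtNoisyM (d : ℕ) (ε : ℝ) : Fin d → Matrix (Fin d) (Fin d) ℂ :=
  fun x => ((Real.sqrt (((d : ℝ) - ((d : ℝ) - 1) * ε) / d)) : ℂ) • Matrix.single x x 1
    + ((Real.sqrt (ε / d)) : ℂ) • (1 - Matrix.single x x 1)

section VarianceDecomposition

variable {ι : Type*} [Fintype ι] (y : ι → ℝ)

theorem sum_sq_eq_sq_sum_div_card_add_sum_sq_sub_mean (hι : Fintype.card ι ≠ 0) :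
    ∑ i, y i ^ 2 = (∑ i, y i) ^ 2 / Fintype.card ι +
      ∑ i, (y i - (∑ j, y j) / Fintype.card ι) ^ 2 := by
  have hn : (Fintype.card ι : ℝ) ≠ 0 := Nat.cast_ne_zero.mpr hι
  simp only [sub_sq, Finset.sum_add_distrib, Finset.sum_sub_distrib, ← Finset.sum_mul,
    ← Finset.mul_sum, Finset.sum_const, Finset.card_univ, nsmul_eq_mul]
  field_simp
  ring

theorem sq_sum_div_card_le_sum_sq (hι : Fintype.card ι ≠ 0) :
    (∑ i, y i) ^ 2 / Fintype.card ι ≤ ∑ i, y i ^ 2 := by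
  rw [sum_sq_eq_sq_sum_div_card_add_sum_sq_sub_mean y hι]
  exact le_add_of_nonneg_right (Finset.sum_nonneg fun i _ => sq_nonneg _)

theorem sq_sum_div_card_lt_sum_sq (hι : Fintype.card ι ≠ 0)
    (hy : ∃ i, y i ≠ (∑ j, y j) / Fintype.card ι) :
    (∑ i, y i) ^ 2 / Fintype.card ι < ∑ i, y i ^ 2 := by
  obtain ⟨i, hi⟩ := hy
  rw [sum_sq_eq_sq_sum_div_card_add_sum_sq_sub_mean y hι]
  exact lt_add_of_pos_right _ <| Finset.sum_pos' (fun j _ => sq_nonneg _)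
    ⟨i, Finset.mem_univ i, sq_pos_of_ne_zero (sub_ne_zero.mpr hi)⟩

end VarianceDecomposition

section QuadraticForms

variable {n : Type*} [Fintype n] (φ : n → ℂ)

theorem star_dotProduct_self_eq_sum_norm_sq : star φ ⬝ᵥ φ = ((∑ x, ‖φ x‖ ^ 2 : ℝ) : ℂ) := by
  simp [dotProduct, Complex.conj_mul']

variable [DecidableEq n]

theorem star_dotProduct_single_mulVec (x : n) :
    star φ ⬝ᵥ single x x 1 *ᵥ φ = ((‖φ x‖ ^ 2 : ℝ) : ℂ) := by
  simp [single_mulVec_eq, Complex.mul_conj']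

theorem re_star_dotProduct_smul_single_add_smul_one_sub_single_mulVec
    (hφ : star φ ⬝ᵥ φ = 1) (a b : ℝ) (x : n) :
    (star φ ⬝ᵥ ((a : ℂ) • single x x 1 + (b : ℂ) • (1 - single x x 1)) *ᵥ φ).re =
      b + (a - b) * ‖φ x‖ ^ 2 := by
  simp only [add_mulVec, smul_mulVec, sub_mulVec, one_mulVec, dotProduct_add, dotProduct_smul,
    dotProduct_sub, star_dotProduct_single_mulVec, hφ, smul_eq_mul]
  norm_cast
  ring_nf

end QuadraticForms

theorem sqrt_div_lt_sqrt_sub_mul_div {n ε : ℝ} (hn : 1 ≤ n) (hε : ε < 1) :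
    √(ε / n) < √((n - (n - 1) * ε) / n) := by
  have hn0 : 0 < n := by linarith
  rw [Real.sqrt_lt_sqrt_iff_of_pos (by apply div_pos <;> nlinarith),
    div_lt_div_iff_of_pos_right hn0]
  nlinarith

theorem sq_sqrt_div_add_mul_sqrt_div_div {n : ℝ} (hn : 0 < n) (u v c : ℝ) :
    (√(u / n) + c * √(v / n)) ^ 2 / n = 1 / n ^ 2 * (√u + c * √v) ^ 2 := by
  have hsqrt : √n ^ 2 = n := Real.sq_sqrt hn.le
  have : √n ≠ 0 := by positivity
  rw [Real.sqrt_div' _ hn.le, Real.sqrt_div' _ hn.le]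
  field_simp
  rw [hsqrt]
  ring

theorem noisy_projective_lower_bound_general
    {d : ℕ} (ε : ℝ) (hε1 : ε < 1)
    (φ : Fin d → ℂ) (hφ : star φ ⬝ᵥ φ = 1) :
    (1 / (d : ℝ) ^ 2) *
        (Real.sqrt ((d : ℝ) - ((d : ℝ) - 1) * ε) + ((d : ℝ) - 1) * Real.sqrt ε) ^ 2
      ≤ ∑ x, ((star φ ⬝ᵥ (sqrtNoisyM d ε x).mulVec φ).re) ^ 2 ∧
    ((∃ x, ‖φ x‖ ^ 2 ≠ 1 / (d : ℝ)) →
      (1 / (d : ℝ) ^ 2) *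
          (Real.sqrt ((d : ℝ) - ((d : ℝ) - 1) * ε) + ((d : ℝ) - 1) * Real.sqrt ε) ^ 2
        < ∑ x, ((star φ ⬝ᵥ (sqrtNoisyM d ε x).mulVec φ).re) ^ 2) := by
  have hd : Fintype.card (Fin d) ≠ 0 := by
    intro h
    simp [Fintype.card_eq_zero_iff.mp h] at hφ
  have hd1 : (1 : ℝ) ≤ d := by simpa [Nat.one_le_iff_ne_zero] using hd
  set a := √(((d : ℝ) - ((d : ℝ) - 1) * ε) / d)
  set b := √(ε / d)
  have hval (x : Fin d) : (star φ ⬝ᵥ (sqrtNoisyM d ε x) *ᵥ φ).re = b + (a - b) * ‖φ x‖ ^ 2 :=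
    re_star_dotProduct_smul_single_add_smul_one_sub_single_mulVec φ hφ a b x
  have hp : ∑ x, ‖φ x‖ ^ 2 = 1 := by
    exact_mod_cast (star_dotProduct_self_eq_sum_norm_sq φ).symm.trans hφ
  have htrace : ∑ x, (b + (a - b) * ‖φ x‖ ^ 2) = a + (d - 1) * b := by
    simp only [Finset.sum_add_distrib, Finset.sum_const, Finset.card_univ, Fintype.card_fin,
      nsmul_eq_mul, ← Finset.mul_sum, hp, mul_one]
    ring
  have hbound : 1 / (d : ℝ) ^ 2 * (√((d : ℝ) - ((d : ℝ) - 1) * ε) + ((d : ℝ) - 1) * √ε) ^ 2 =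
      (∑ x, (b + (a - b) * ‖φ x‖ ^ 2)) ^ 2 / Fintype.card (Fin d) := by
    rw [htrace, Fintype.card_fin, sq_sqrt_div_add_mul_sqrt_div_div (by positivity)]
  simp only [hval, hbound]
  refine ⟨sq_sum_div_card_le_sum_sq _ hd, fun ⟨x, hx⟩ => sq_sum_div_card_lt_sum_sq _ hd ⟨x, ?_⟩⟩
  have hab : 0 < a - b := sub_pos.mpr (sqrt_div_lt_sqrt_sub_mul_div hd1 hε1)
  rw [htrace, Fintype.card_fin]
  intro h
  have hdev : (a - b) * (‖φ x‖ ^ 2 - 1 / d) = 0 := by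
    field_simp at h ⊢
    linarith
  exact hx (sub_eq_zero.mp ((mul_eq_zero.mp hdev).resolve_left hab.ne'))

/-- **Lemma 3** (bound): for every unit state `φ`,
`∑_x ⟪φ, √(M x) φ⟫² ≥ (1/d)(tr √M₁)² = (1/d²)(√(d−(d−1)ε) + (d−1)√ε)²`, with strict
inequality whenever `φ` is not unbiased to the measurement basis. -/
theorem noisy_projective_lower_bound
    {d : ℕ} (hd : 2 ≤ d) (ε : ℝ) (hε0 : 0 < ε) (hε1 : ε < 1)
    (φ : Fin d → ℂ) (hφ : star φ ⬝ᵥ φ = 1) :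
    (1 / (d : ℝ) ^ 2) *
        (Real.sqrt ((d : ℝ) - ((d : ℝ) - 1) * ε) + ((d : ℝ) - 1) * Real.sqrt ε) ^ 2
      ≤ ∑ x, ((star φ ⬝ᵥ (sqrtNoisyM d ε x).mulVec φ).re) ^ 2 ∧
    ((∃ x, ‖φ x‖ ^ 2 ≠ 1 / (d : ℝ)) →
      (1 / (d : ℝ) ^ 2) *
          (Real.sqrt ((d : ℝ) - ((d : ℝ) - 1) * ε) + ((d : ℝ) - 1) * Real.sqrt ε) ^ 2
        < ∑ x, ((star φ ⬝ᵥ (sqrtNoisyM d ε x).mulVec φ).re) ^ 2) :=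
  noisy_projective_lower_bound_general ε hε1 φ hφ
end
end

section
/- Let 0 < ε < 1 and d ≥ 2, let M be the noisy projective measurement in dimension d, and let ψ = (1/√d)·(1,…,1) ∈ ℂ^d be the unbiased state. Then every valid decomposition K of M satisfies ∑_j ⟪ψ, (K j j)·ψ⟫ ≤ (1/d)·(tr √(M 0))² = (1/d²)·(√(d−(d−1)ε) + (d−1)√ε)². -/
/-!
Semidefinite weak duality. If `Y j` are traceless and `Z x` satisfy
`Y j + Z x ⪰ [x = j] ψψ*`, pairing these constraints with the `K x j` and summing gives
`objective ≤ ∑ x, tr (M x * Z x)`: the `Y`-terms vanish because each column sum `∑ x, K x j` is a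
multiple of the identity, and the row sums are `M x`. With `a = √(d - (d - 1) ε)` and `b = √ε`, an
explicit real dual solution built from the all-ones vector and the basis vectors attains
`(a + (d - 1) b)² / d²`: for `x ≠ j`, `Y j + Z x` is a sum of two positive rank-one matrices, and
`Y j + Z j - ψψ*` is a positive multiple of `q qᵀ` with `q = (a + (d - 1) b) e_j - a 𝟙`.
-/

open Matrix ComplexOrder

noncomputable section

open MatrixOrder in
theorem Matrix.PosSemidef.trace_mul_nonneg {𝕜 n : Type*} [RCLike 𝕜] [Fintype n]
    {A B : Matrix n n 𝕜} (hA : A.PosSemidef) (hB : B.PosSemidef) : 0 ≤ (A * B).trace := by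
  classical
  obtain ⟨C, rfl⟩ := CStarAlgebra.nonneg_iff_eq_star_mul_self.mp hB.nonneg
  rw [← mul_assoc, trace_mul_cycle, star_eq_conjTranspose]
  exact (hA.mul_mul_conjTranspose_same C).trace_nonneg

open MatrixOrder in
theorem Matrix.PosSemidef.map_ofReal {n : Type*} [Fintype n]
    {A : Matrix n n ℝ} (hA : A.PosSemidef) : (A.map Complex.ofReal).PosSemidef := by
  classical
  obtain ⟨B, rfl⟩ := CStarAlgebra.nonneg_iff_eq_star_mul_self.mp hA.nonneg
  rw [show Complex.ofReal = Complex.ofRealHom from rfl, Matrix.map_mul, star_eq_conjTranspose,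
    conjTranspose_map (⇑Complex.ofRealHom) fun _ => (Complex.conj_ofReal _).symm]
  exact posSemidef_conjTranspose_mul_self _

theorem Matrix.posSemidef_vecMulVec_self {n : Type*} [Fintype n] (v : n → ℝ) :
    (vecMulVec v v).PosSemidef := by
  simpa using posSemidef_vecMulVec_self_star v

theorem Matrix.trace_map_ofReal {n : Type*} [Fintype n] (A : Matrix n n ℝ) :
    (A.map Complex.ofReal).trace = A.trace :=
  (AddMonoidHom.map_trace Complex.ofRealHom A).symm

theorem Matrix.trace_mul_vecMulVec {R n : Type*} [CommSemiring R] [Fintype n]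
    (A : Matrix n n R) (u v : n → R) : (A * vecMulVec u v).trace = v ⬝ᵥ A *ᵥ u := by
  simp only [trace, diag, mul_apply, vecMulVec_apply, dotProduct, mulVec, Finset.mul_sum]
  exact Finset.sum_congr rfl fun i _ => Finset.sum_congr rfl fun k _ => by ring

theorem Matrix.trace_mul_eq_zero_of_smul_eq {R : Type*} [Field R] [CharZero R] {d : ℕ}
    {N Y : Matrix (Fin d) (Fin d) R} {t : R} (hN : (d : R) • N = t • 1) (hY : Y.trace = 0) : (N * Y).trace = 0 := by
  rcases eq_or_ne d 0 with rfl | hd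
  · simp [trace]
  · have h : (d : R) * (N * Y).trace = 0 := by
      rw [← smul_eq_mul, ← trace_smul, ← smul_mul_assoc, hN, smul_mul_assoc, one_mul, trace_smul,
        hY, smul_zero]
    exact (mul_eq_zero.mp h).resolve_left (by exact_mod_cast hd)

theorem IsDecomp.objective_le_of_dual {m d : ℕ} {M : Fin m → Matrix (Fin d) (Fin d) ℂ}
    {K : Fin m → Fin m → Matrix (Fin d) (Fin d) ℂ} (hK : IsDecomp M K) (φ : Fin d → ℂ)
    {Y Z : Fin m → Matrix (Fin d) (Fin d) ℂ} (hY : ∀ j, (Y j).trace = 0)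
    (hdiag : ∀ j, (Y j + Z j - vecMulVec φ (star φ)).PosSemidef)
    (hoff : ∀ x j, x ≠ j → (Y j + Z x).PosSemidef) :
    objective K φ ≤ (∑ x, (M x * Z x).trace).re := by
  obtain ⟨hK, hcol, hrow⟩ := hK
  have hle (j : Fin m) : (star φ ⬝ᵥ K j j *ᵥ φ).re ≤ ∑ x, (K x j * (Y j + Z x)).trace.re := by
    have hjj : (K j j * (Y j + Z j)).trace
        = star φ ⬝ᵥ K j j *ᵥ φ + (K j j * (Y j + Z j - vecMulVec φ (star φ))).trace := by
      rw [mul_sub, trace_sub, trace_mul_vecMulVec]; ring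
    rw [← Finset.add_sum_erase _ _ (Finset.mem_univ j), hjj, Complex.add_re]
    have h₁ := (Complex.nonneg_iff.mp ((hK j j).trace_mul_nonneg (hdiag j))).1
    have h₂ : 0 ≤ ∑ x ∈ Finset.univ.erase j, (K x j * (Y j + Z x)).trace.re :=
      Finset.sum_nonneg fun x hx =>
        (Complex.nonneg_iff.mp ((hK x j).trace_mul_nonneg (hoff x j (Finset.ne_of_mem_erase hx)))).1
    linarith
  have hsum : ∑ j, ∑ x, (K x j * (Y j + Z x)).trace = ∑ x, (M x * Z x).trace := by
    have hYj (j : Fin m) : ∑ x, (K x j * Y j).trace = 0 := by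
      rw [← trace_sum, ← Finset.sum_mul]
      exact trace_mul_eq_zero_of_smul_eq (hcol j) (hY j)
    simp only [mul_add, trace_add, Finset.sum_add_distrib, hYj, zero_add]
    rw [Finset.sum_comm]
    simp only [← trace_sum, ← Finset.sum_mul, hrow]
  calc objective K φ ≤ ∑ j, ∑ x, (K x j * (Y j + Z x)).trace.re :=
        Finset.sum_le_sum fun j _ => hle j
    _ = (∑ x, (M x * Z x).trace).re := by simp only [← hsum, Complex.re_sum]

theorem trace_noisyM_mul {d : ℕ} (ε : ℝ) (x : Fin d) (A : Matrix (Fin d) (Fin d) ℂ) :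
    (noisyM d ε x * A).trace = (1 - ε : ℝ) * A x x + (ε / d : ℝ) * A.trace := by
  rw [noisyM, add_mul, trace_add, smul_mul_assoc, smul_mul_assoc, one_mul, trace_smul, trace_smul,
    trace_single_mul, one_smul, smul_eq_mul, smul_eq_mul]

theorem vecMulVec_unbiased (d : ℕ) :
    vecMulVec (fun _ : Fin d => ((√d : ℝ) : ℂ)⁻¹) (star fun _ : Fin d => ((√d : ℝ) : ℂ)⁻¹)
      = ((1 / d : ℝ) • vecMulVec (1 : Fin d → ℝ) 1).map Complex.ofReal := by
  ext i k
  simp only [vecMulVec_apply, Pi.star_apply, star_inv₀, Complex.star_def, Complex.conj_ofReal,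
    map_apply, Matrix.smul_apply, Pi.one_apply, mul_one, smul_eq_mul]
  rw [← mul_inv, ← Complex.ofReal_mul, Real.mul_self_sqrt (Nat.cast_nonneg d)]
  push_cast
  ring

namespace NoisyDual

/-! Coefficients of the dual solution, where `a = √(n - (n - 1) ε)` and `b = √ε`; then
`S a b n / √n = tr √(M x)`. -/

variable (a b n : ℝ)

def S : ℝ := a + (n - 1) * b
def rho : ℝ := (1 - b ^ 2) ^ 2 / (n * a * b * (a + b) ^ 2)
def w : ℝ := 1 + n * rho a b n * a ^ 2
def c : ℝ := (1 - b ^ 2) * S a b n / (n * (a + b) ^ 2)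
def y : ℝ := rho a b n * S a b n ^ 2 * (a * b) / (1 + a * b)
def z : ℝ := rho a b n * S a b n ^ 2 / (1 + a * b)
def nu : ℝ := n / w a b n * c a b n ^ 2 / (a * b)
def z0 : ℝ := (y a b n + 2 * b * c a b n + w a b n) / n

variable {a b n}

lemma rho_nonneg (ha : 0 < a) (hb : 0 < b) (hn : 0 < n) : 0 ≤ rho a b n := by
  unfold rho; positivity

lemma w_pos (ha : 0 < a) (hb : 0 < b) (hn : 0 < n) : 0 < w a b n := by
  have := rho_nonneg ha hb hn
  unfold w; positivity

lemma nu_nonneg (ha : 0 < a) (hb : 0 < b) (hn : 0 < n) : 0 ≤ nu a b n := by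
  have := w_pos ha hb hn
  unfold nu; positivity

lemma y_eq (ha : 0 < a) (hb : 0 < b) (hn : 0 < n) :
    y a b n = n / w a b n * (b * c a b n) ^ 2 + nu a b n * a ^ 2 := by
  have hw := (w_pos ha hb hn).ne'
  have h1 : 1 + a * b ≠ 0 := by positivity
  have h2 : a + b ≠ 0 := by positivity
  simp only [y, nu, c, w, rho] at hw ⊢
  field_simp
  ring

lemma z_eq (ha : 0 < a) (hb : 0 < b) (hn : 0 < n) :
    z a b n = n / w a b n * (c a b n / b) ^ 2 + nu a b n * b ^ 2 := by
  have hw := (w_pos ha hb hn).ne'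
  have h1 : 1 + a * b ≠ 0 := by positivity
  have h2 : a + b ≠ 0 := by positivity
  simp only [z, nu, c, w, rho] at hw ⊢
  field_simp
  ring

lemma dualValue_eq (ha : 0 < a) (hb : 0 < b) (hn : 0 < n) (key : a ^ 2 + (n - 1) * b ^ 2 = n) :
    y a b n + 2 * b * c a b n + w a b n + (z a b n - 2 * (c a b n / b)) * a ^ 2
      = S a b n ^ 2 / n ^ 2 := by
  have h1 : 1 + a * b ≠ 0 := by positivity
  have h2 : a + b ≠ 0 := by positivity
  have hS : S a b n * (a + b) = n * (1 + a * b) := by unfold S; linear_combination key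
  have hu : n * (1 - b ^ 2) = a ^ 2 - b ^ 2 := by linear_combination -key
  have hc : 2 * b * c a b n - 2 * (c a b n / b) * a ^ 2
      = -2 * ((1 - b ^ 2) ^ 2 * S a b n / (b * (a + b) ^ 2)) := by
    unfold c; field_simp; linear_combination ((1 - b ^ 2) * S a b n) * hu
  have hyz : y a b n + z a b n * a ^ 2 = (1 - b ^ 2) ^ 2 * S a b n / (b * (a + b) ^ 2) := by
    unfold y z rho; field_simp; linear_combination (S a b n * (1 - b ^ 2) ^ 2) * hS
  have hw : w a b n = 1 + (1 - b ^ 2) ^ 2 * a / (b * (a + b) ^ 2) := by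
    unfold w rho; field_simp
  calc _ = 1 - (1 - b ^ 2) ^ 2 * (S a b n - a) / (b * (a + b) ^ 2) := by
          rw [hw]; linear_combination hc + hyz
    _ = 1 - (1 - b ^ 2) * (a ^ 2 - 1) / (a + b) ^ 2 := by
          unfold S; field_simp; linear_combination b * (1 - b ^ 2) * key
    _ = (1 + a * b) ^ 2 / (a + b) ^ 2 := by field_simp; ring
    _ = S a b n ^ 2 / n ^ 2 := by
          rw [div_eq_div_iff (by positivity) (by positivity)]
          linear_combination (-(S a b n * (a + b) + n * (1 + a * b))) * hS

variable (a b) {d : ℕ}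

def dualY (j : Fin d) : Matrix (Fin d) (Fin d) ℝ :=
  y a b d • vecMulVec (Pi.single j 1) (Pi.single j 1)
    + (b * c a b d) • (vecMulVec (Pi.single j 1) 1 + vecMulVec 1 (Pi.single j 1))
    + (w a b d / d) • vecMulVec 1 1 - z0 a b d • 1

def dualZ (x : Fin d) : Matrix (Fin d) (Fin d) ℝ :=
  z0 a b d • 1 + z a b d • vecMulVec (Pi.single x 1) (Pi.single x 1)
    - (c a b d / b) • (vecMulVec (Pi.single x 1) 1 + vecMulVec 1 (Pi.single x 1))

def vecM (x j : Fin d) : Fin d → ℝ :=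
  (w a b d / d) • 1 + (b * c a b d) • Pi.single j 1 - (c a b d / b) • Pi.single x 1

def vecP (x j : Fin d) : Fin d → ℝ := a • Pi.single j 1 + b • Pi.single x 1

def vecQ (j : Fin d) : Fin d → ℝ := S a b d • Pi.single j 1 - a • 1

variable {a b}

lemma dualY_add_dualZ (ha : 0 < a) (hb : 0 < b) (hd : 0 < (d : ℝ)) (x j : Fin d) :
    dualY a b j + dualZ a b x
      = (d / w a b d) • vecMulVec (vecM a b x j) (vecM a b x j)
        + nu a b d • vecMulVec (vecP a b x j) (vecP a b x j) := by
  have hw := (w_pos ha hb hd).ne'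
  have hy := y_eq ha hb hd
  have hz := z_eq ha hb hd
  have hnu : nu a b d * (a * b) = d / w a b d * c a b d ^ 2 := by
    unfold nu; field_simp
  simp only [dualY, dualZ, vecM, vecP, vecMulVec_add, add_vecMulVec, vecMulVec_sub, sub_vecMulVec,
    vecMulVec_smul, smul_vecMulVec]
  linear_combination (norm := match_scalars <;> field_simp <;> ring)
    hy • vecMulVec (Pi.single j 1) (Pi.single j 1) + hz • vecMulVec (Pi.single x 1) (Pi.single x 1)
      - hnu • (vecMulVec (Pi.single j 1) (Pi.single x 1) + vecMulVec (Pi.single x 1) (Pi.single j 1))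

lemma dualY_add_dualZ_self (ha : 0 < a) (hb : 0 < b) (hd : 0 < (d : ℝ)) (j : Fin d) :
    dualY a b j + dualZ a b j - (1 / d : ℝ) • vecMulVec 1 1
      = rho a b d • vecMulVec (vecQ a b j) (vecQ a b j) := by
  have h1 : 1 + a * b ≠ 0 := by positivity
  have h2 : a + b ≠ 0 := by positivity
  simp only [dualY, dualZ, vecQ, vecMulVec_sub, sub_vecMulVec, vecMulVec_smul, smul_vecMulVec,
    y, z, w, c, rho]
  match_scalars <;> field_simp <;> ring

lemma posSemidef_dualY_add_dualZ (ha : 0 < a) (hb : 0 < b) (hd : 0 < (d : ℝ)) (x j : Fin d) :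
    (dualY a b j + dualZ a b x).PosSemidef := by
  rw [dualY_add_dualZ ha hb hd]
  have := w_pos ha hb hd
  exact ((posSemidef_vecMulVec_self _).smul (by positivity)).add
    ((posSemidef_vecMulVec_self _).smul (nu_nonneg ha hb hd))

lemma posSemidef_dualY_add_dualZ_sub (ha : 0 < a) (hb : 0 < b) (hd : 0 < (d : ℝ)) (j : Fin d) :
    (dualY a b j + dualZ a b j - (1 / d : ℝ) • vecMulVec 1 1).PosSemidef := by
  rw [dualY_add_dualZ_self ha hb hd]
  exact (posSemidef_vecMulVec_self _).smul (rho_nonneg ha hb hd)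

lemma trace_dualY (hd : 0 < (d : ℝ)) (j : Fin d) : (dualY a b j).trace = 0 := by
  simp only [dualY, z0, trace_add, trace_sub, trace_smul, trace_vecMulVec, trace_one,
    single_dotProduct, dotProduct_single, one_dotProduct_one, Pi.single_eq_same, Pi.one_apply,
    Fintype.card_fin, smul_eq_mul]
  field_simp
  ring

lemma dualZ_apply_self (x : Fin d) :
    dualZ a b x x x = z0 a b d + z a b d - 2 * (c a b d / b) := by
  simp only [dualZ, Matrix.add_apply, Matrix.sub_apply, Matrix.smul_apply, one_apply_eq,
    vecMulVec_apply, Pi.single_eq_same, Pi.one_apply, smul_eq_mul]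
  ring

lemma trace_dualZ (x : Fin d) :
    (dualZ a b x).trace = d * z0 a b d + z a b d - 2 * (c a b d / b) := by
  simp only [dualZ, trace_add, trace_sub, trace_smul, trace_vecMulVec, trace_one,
    single_dotProduct, dotProduct_single, Pi.single_eq_same, Pi.one_apply, Fintype.card_fin,
    smul_eq_mul]
  ring

lemma sum_re_trace_noisyM_mul_dualZ (ha : 0 < a) (hb : 0 < b) (hd : 0 < (d : ℝ)) {ε : ℝ}
    (ha2 : a ^ 2 = d - (d - 1) * ε) (hb2 : b ^ 2 = ε) :
    (∑ x, (noisyM d ε x * (dualZ a b x).map Complex.ofReal).trace).re = S a b d ^ 2 / d ^ 2 := by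
  have key : a ^ 2 + (d - 1) * b ^ 2 = d := by rw [ha2, hb2]; ring
  rw [Complex.re_sum]
  simp only [trace_noisyM_mul, map_apply, trace_map_ofReal, dualZ_apply_self, trace_dualZ,
    ← Complex.ofReal_mul, ← Complex.ofReal_add, Complex.ofReal_re, Finset.sum_const,
    Finset.card_univ, Fintype.card_fin, nsmul_eq_mul]
  rw [← dualValue_eq ha hb hd key, z0, ha2]
  field_simp
  ring

end NoisyDual

open NoisyDual in
/-- **Lemma 4**: for the noisy projective measurement in dimension `d` and the unbiased
state `ψ = (1/√d)(1,…,1)`, every valid decomposition has objective at most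
`(1/d)(tr √M₁)² = (1/d²)(√(d−(d−1)ε) + (d−1)√ε)²`. -/
theorem noisy_projective_upper_bound
    {d : ℕ} (hd : 2 ≤ d) (ε : ℝ) (hε0 : 0 < ε) (hε1 : ε < 1)
    (K : Fin d → Fin d → Matrix (Fin d) (Fin d) ℂ) (hK : IsDecomp (noisyM d ε) K) :
    objective K (fun _ => ((Real.sqrt d : ℂ))⁻¹)
      ≤ (1 / (d : ℝ) ^ 2) *
        (Real.sqrt ((d : ℝ) - ((d : ℝ) - 1) * ε) + ((d : ℝ) - 1) * Real.sqrt ε) ^ 2 := by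
  have hd0 : (0 : ℝ) < d := Nat.cast_pos.2 (by omega)
  have harg : 0 < (d : ℝ) - (d - 1) * ε := by nlinarith
  set a := √((d : ℝ) - (d - 1) * ε)
  set b := √ε
  have ha : 0 < a := Real.sqrt_pos.2 harg
  have hb : 0 < b := Real.sqrt_pos.2 hε0
  calc objective K _ ≤ (∑ x, (noisyM d ε x * (dualZ a b x).map Complex.ofReal).trace).re := by
        refine hK.objective_le_of_dual _ (Y := fun j => (dualY a b j).map Complex.ofReal)
          (fun j => ?_) (fun j => ?_) (fun x j _ => ?_)
        · rw [trace_map_ofReal, trace_dualY hd0, Complex.ofReal_zero]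
        · rw [vecMulVec_unbiased, ← Matrix.map_add _ Complex.ofReal_add,
            ← Matrix.map_sub _ Complex.ofReal_sub]
          exact (posSemidef_dualY_add_dualZ_sub ha hb hd0 j).map_ofReal
        · rw [← Matrix.map_add _ Complex.ofReal_add]
          exact (posSemidef_dualY_add_dualZ ha hb hd0 x j).map_ofReal
    _ = S a b d ^ 2 / d ^ 2 :=
        sum_re_trace_noisyM_mul_dualZ ha hb hd0 (Real.sq_sqrt harg.le) (Real.sq_sqrt hε0.le)
    _ = _ := by rw [S]; ring
end
end

section
/- Weak duality for the guessing-probability SDP: let M be an m-outcome POVM in dimension d, let φ ∈ ℂ^d be a unit vector, let K be a valid decomposition of M, and let Y : Fin m → Matrix (Fin d) (Fin d) ℂ and G : Fin m → Matrix (Fin d) (Fin d) ℂ be families of Hermitian matrices with Matrix.trace (G j) = 0 for all j and with Y x − (if x = j then |φ⟩⟨φ| else 0) − G j positive semidefinite for all x and j. Then ∑_j ⟪φ, (K j j)·φ⟫ ≤ Re (∑_x Matrix.trace (Y x * M x)). -/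
/-!
Lagrangian weak duality. Each slack `Y x - [x = j] |φ⟩⟨φ| - G j` is positive semidefinite, and so
is `K x j`, so their trace pairing is nonnegative. Summing over `x, j`, the `Y`-terms add up to
`tr (Y x * M x)` because `∑_j K x j = M x`, the `|φ⟩⟨φ|`-terms to the objective, and the
`G`-terms vanish: `∑_x K x j` is a multiple of the identity while `G j` is traceless.
-/

open Matrix ComplexOrder

noncomputable section

namespace Matrix

variable {n 𝕜 : Type*} [Fintype n]

theorem trace_vecMulVec_mul [CommSemiring 𝕜] (u v : n → 𝕜) (A : Matrix n n 𝕜) :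
    (vecMulVec u v * A).trace = v ⬝ᵥ A *ᵥ u := by
  rw [vecMulVec_mul, trace_vecMulVec, dotProduct_comm, dotProduct_mulVec]

theorem PosSemidef.trace_mul_nonneg_s11 [RCLike 𝕜] {A B : Matrix n n 𝕜} (hA : A.PosSemidef)
    (hB : B.PosSemidef) : 0 ≤ (A * B).trace := by
  classical
  open scoped MatrixOrder in
  obtain ⟨C, rfl⟩ := CStarAlgebra.nonneg_iff_eq_star_mul_self.mp hB.nonneg
  rw [← mul_assoc, trace_mul_cycle]
  exact (hA.mul_mul_conjTranspose_same C).trace_nonneg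

theorem trace_mul_eq_zero_of_card_smul_eq_smul_one [DecidableEq n] [Field 𝕜] [CharZero 𝕜]
    {A G : Matrix n n 𝕜} {c : 𝕜} (hA : (Fintype.card n : 𝕜) • A = c • 1) (hG : G.trace = 0) :
    (G * A).trace = 0 := by
  rcases isEmpty_or_nonempty n with hn | hn
  · simp [trace]
  have hcard : (Fintype.card n : 𝕜) ≠ 0 := Nat.cast_ne_zero.mpr Fintype.card_ne_zero
  refine (mul_eq_zero.mp ?_).resolve_left hcard
  rw [← smul_eq_mul, ← trace_smul, ← Matrix.mul_smul, hA, Matrix.mul_smul, mul_one, trace_smul, hG,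
    smul_zero]

end Matrix

theorem guessing_sdp_weak_duality_general
    {m d : ℕ}
    (M : Fin m → Matrix (Fin d) (Fin d) ℂ)
    (φ : Fin d → ℂ)
    (K : Fin m → Fin m → Matrix (Fin d) (Fin d) ℂ) (hK : IsDecomp M K)
    (Y G : Fin m → Matrix (Fin d) (Fin d) ℂ)
    (hGtr : ∀ j, (G j).trace = 0)
    (hfeas : ∀ x j,
      (Y x - (if x = j then vecMulVec φ (star φ) else 0) - G j).PosSemidef) :
    objective K φ ≤ (∑ x, (Y x * M x).trace).re := by
  obtain ⟨hKpsd, hKunif, hKsum⟩ := hK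
  set P := vecMulVec φ (star φ)
  have hslack : 0 ≤ ∑ x, ∑ j, ((Y x - (if x = j then P else 0) - G j) * K x j).trace :=
    Finset.sum_nonneg fun x _ => Finset.sum_nonneg fun j _ =>
      (hfeas x j).trace_mul_nonneg_s11 (hKpsd x j)
  have hG : ∀ j, (G j * ∑ x, K x j).trace = 0 := fun j =>
    trace_mul_eq_zero_of_card_smul_eq_smul_one (by simpa using hKunif j) (hGtr j)
  have hexpand : ∑ x, ∑ j, ((Y x - (if x = j then P else 0) - G j) * K x j).trace
      = ∑ x, (Y x * M x).trace - ∑ x, (P * K x x).trace - ∑ j, (G j * ∑ x, K x j).trace := by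
    simp only [sub_mul, ite_mul, zero_mul, trace_sub, apply_ite trace, trace_zero,
      Finset.sum_sub_distrib, Finset.sum_ite_eq, Finset.mem_univ, if_true, ← hKsum,
      Finset.mul_sum, trace_sum]
    rw [Finset.sum_comm (f := fun x j => (G j * K x j).trace)]
  rw [hexpand, Finset.sum_eq_zero fun j _ => hG j, sub_zero, sub_nonneg] at hslack
  calc objective K φ = (∑ x, (P * K x x).trace).re := by
        simp only [objective, Complex.re_sum, P, trace_vecMulVec_mul]
    _ ≤ (∑ x, (Y x * M x).trace).re := (Complex.le_def.mp hslack).1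

/-- Weak duality for the guessing-probability SDP: any feasible dual variables `Y`, `G`
bound the objective of any valid decomposition from above by `Re ∑_x tr (Y x · M x)`. -/
theorem guessing_sdp_weak_duality
    {m d : ℕ}
    (M : Fin m → Matrix (Fin d) (Fin d) ℂ)
    (hpsd : ∀ x, (M x).PosSemidef) (hsum : ∑ x, M x = 1)
    (φ : Fin d → ℂ) (hφ : star φ ⬝ᵥ φ = 1)
    (K : Fin m → Fin m → Matrix (Fin d) (Fin d) ℂ) (hK : IsDecomp M K)
    (Y G : Fin m → Matrix (Fin d) (Fin d) ℂ)
    (hY : ∀ x, (Y x).IsHermitian) (hG : ∀ j, (G j).IsHermitian)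
    (hGtr : ∀ j, (G j).trace = 0)
    (hfeas : ∀ x j,
      (Y x - (if x = j then vecMulVec φ (star φ) else 0) - G j).PosSemidef) :
    objective K φ ≤ (∑ x, (Y x * M x).trace).re :=
  guessing_sdp_weak_duality_general M φ K hK Y G hGtr hfeas
end
end

section
/- Let M be an m-outcome POVM in dimension d, let K be a valid decomposition of M, let a ≠ b be indices in Fin m, and let c > 0 be a real number such that K a b − c•𝟙 is positive semidefinite. Define K' to agree with K except K' a b = K a b − c•𝟙 and K' a a = K a a + c•𝟙. Then K' is a valid decomposition of M, and for every unit vector φ ∈ ℂ^d the objective satisfies ∑_j ⟪φ, (K' j j)·φ⟫ = ∑_j ⟪φ, (K j j)·φ⟫ + c. (In particular, no decomposition maximizing the objective can have a positive definite off-diagonal element K a b with a ≠ b.) -/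
/-!
Moving `c • 𝟙` from `K a b` to `K a a` keeps every row sum `∑ j, K x j`, so the POVM is unchanged,
and changes the column sums only by `± c • 𝟙`; since `c • 𝟙` satisfies the column condition
`d • A = (tr A) • 𝟙` and that condition is linear, it survives. The only diagonal entry that moves
is `K a a`, which gains `c • 𝟙` and so adds `c ⟪φ, φ⟫ = c` to the objective.
-/

open Matrix ComplexOrder

noncomputable section

section TransferToDiag

variable {ι α : Type*} [DecidableEq ι] [AddCommGroup α]

def transferToDiag (K : ι → ι → α) (a b : ι) (S : α) : ι → ι → α :=
  K + Pi.single a (Pi.single a S - Pi.single b S)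

lemma transferToDiag_eq_ite (K : ι → ι → α) {a b : ι} (hab : a ≠ b) (S : α) :
    (fun x j => if x = a ∧ j = b then K a b - S
      else if x = a ∧ j = a then K a a + S else K x j) = transferToDiag K a b S := by
  funext x j
  by_cases hx : x = a
  · subst hx
    by_cases hjb : j = b
    · subst hjb; simp [transferToDiag, hab, sub_eq_add_neg]
    · by_cases hja : j = x
      · subst hja; simp [transferToDiag, hab]
      · simp [transferToDiag, hja, hjb]
  · simp [transferToDiag, hx]

lemma transferToDiag_diag (K : ι → ι → α) {a b : ι} (hab : a ≠ b) (S : α) (j : ι) :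
    transferToDiag K a b S j j = K j j + (Pi.single a S : ι → α) j := by
  by_cases hj : j = a
  · subst hj; simp [transferToDiag, hab]
  · simp [transferToDiag, hj]

variable [Fintype ι]

lemma sum_transferToDiag_row (K : ι → ι → α) (a b : ι) (S : α) (x : ι) :
    ∑ j, transferToDiag K a b S x j = ∑ j, K x j := by
  by_cases hx : x = a
  · subst hx; simp [transferToDiag, Finset.sum_add_distrib, Finset.sum_sub_distrib]
  · simp [transferToDiag, hx]

lemma sum_transferToDiag_col (K : ι → ι → α) (a b : ι) (S : α) (j : ι) :
    ∑ x, transferToDiag K a b S x j = ∑ x, K x j + (Pi.single a S - Pi.single b S : ι → α) j := by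
  simp only [transferToDiag, Pi.add_apply, Finset.sum_add_distrib]
  congr 1
  rw [← Finset.sum_apply, Finset.sum_pi_single']
  simp

end TransferToDiag

/-- For `d > 0` these are exactly the scalar matrices. -/
def traceBalanced (d : ℕ) : Submodule ℂ (Matrix (Fin d) (Fin d) ℂ) where
  carrier := {A | (d : ℂ) • A = A.trace • 1}
  add_mem' {A B} hA hB := by
    simp only [Set.mem_ofPred_eq, smul_add, trace_add, add_smul] at *
    rw [hA, hB]
  zero_mem' := by simp
  smul_mem' c A hA := by
    simp only [Set.mem_ofPred_eq, trace_smul, smul_eq_mul, mul_smul] at *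
    rw [smul_comm, hA]

lemma smul_one_mem_traceBalanced (d : ℕ) (c : ℂ) :
    c • (1 : Matrix (Fin d) (Fin d) ℂ) ∈ traceBalanced d :=
  (traceBalanced d).smul_mem c (by simp [traceBalanced, trace_one])

lemma IsDecomp.transferToDiag {m d : ℕ} {M : Fin m → Matrix (Fin d) (Fin d) ℂ}
    {K : Fin m → Fin m → Matrix (Fin d) (Fin d) ℂ} (hK : IsDecomp M K) {a b : Fin m}
    (hab : a ≠ b) {S : Matrix (Fin d) (Fin d) ℂ} (hS : S ∈ traceBalanced d)
    (hS_psd : S.PosSemidef) (hKS : (K a b - S).PosSemidef) :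
    IsDecomp M (transferToDiag K a b S) := by
  obtain ⟨hK_psd, hK_col, hK_row⟩ := hK
  refine ⟨fun x j => ?_, fun j => ?_, fun x => (sum_transferToDiag_row K a b S x).trans (hK_row x)⟩
  · rw [← transferToDiag_eq_ite K hab S]
    dsimp only
    split_ifs
    · exact hKS
    · exact (hK_psd a a).add hS_psd
    · exact hK_psd x j
  · have hcol : ∑ x, K x j ∈ traceBalanced d := by
      simpa [traceBalanced, trace_sum] using hK_col j
    have hsingle : (Pi.single a S - Pi.single b S : Fin m → _) j ∈ traceBalanced d := by
      simp only [Pi.sub_apply, Pi.single_apply]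
      split_ifs <;> simp [hS]
    have := (traceBalanced d).add_mem hcol hsingle
    rw [← sum_transferToDiag_col] at this
    simpa [traceBalanced, trace_sum] using this

lemma objective_transferToDiag {m d : ℕ} (K : Fin m → Fin m → Matrix (Fin d) (Fin d) ℂ)
    {a b : Fin m} (hab : a ≠ b) (S : Matrix (Fin d) (Fin d) ℂ) (φ : Fin d → ℂ) :
    objective (transferToDiag K a b S) φ = objective K φ + (star φ ⬝ᵥ S *ᵥ φ).re := by
  simp only [objective, transferToDiag_diag K hab, add_mulVec, dotProduct_add, Complex.add_re,
    Finset.sum_add_distrib]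
  congr 1
  rw [Finset.sum_eq_single a (fun j _ hj => by simp [hj]) (by simp)]
  simp

lemma dotProduct_smul_one_mulVec_re_of_unit {d : ℕ} (c : ℝ) {φ : Fin d → ℂ}
    (hφ : star φ ⬝ᵥ φ = 1) : (star φ ⬝ᵥ ((c : ℂ) • (1 : Matrix (Fin d) (Fin d) ℂ)) *ᵥ φ).re = c := by
  simp [smul_mulVec, dotProduct_smul, hφ]

theorem improve_decomposition_identity_shift_general
    {m d : ℕ}
    (M : Fin m → Matrix (Fin d) (Fin d) ℂ)
    (K : Fin m → Fin m → Matrix (Fin d) (Fin d) ℂ) (hK : IsDecomp M K)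
    (a b : Fin m) (hab : a ≠ b) (c : ℝ) (hc : 0 < c)
    (hpos : (K a b - (c : ℂ) • (1 : Matrix (Fin d) (Fin d) ℂ)).PosSemidef) :
    let K' : Fin m → Fin m → Matrix (Fin d) (Fin d) ℂ := fun x j =>
      if x = a ∧ j = b then K a b - (c : ℂ) • (1 : Matrix (Fin d) (Fin d) ℂ)
      else if x = a ∧ j = a then K a a + (c : ℂ) • (1 : Matrix (Fin d) (Fin d) ℂ)
      else K x j
    IsDecomp M K' ∧
      ∀ φ : Fin d → ℂ, star φ ⬝ᵥ φ = 1 → objective K' φ = objective K φ + c := by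
  intro K'
  have hK' : K' = transferToDiag K a b ((c : ℂ) • 1) := transferToDiag_eq_ite K hab _
  have hc_psd : ((c : ℂ) • (1 : Matrix (Fin d) (Fin d) ℂ)).PosSemidef :=
    PosSemidef.one.smul (Complex.zero_le_real.mpr hc.le)
  rw [hK']
  refine ⟨hK.transferToDiag hab (smul_one_mem_traceBalanced d c) hc_psd hpos, fun φ hφ => ?_⟩
  rw [objective_transferToDiag K hab, dotProduct_smul_one_mulVec_re_of_unit c hφ]

/-- Shifting a full-rank off-diagonal element: if `K a b − c·𝟙` is positive semidefinite
(`a ≠ b`, `c > 0`), then moving `c·𝟙` from `K a b` to `K a a` yields a valid decomposition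
whose objective at every unit state is larger by exactly `c`. -/
theorem improve_decomposition_identity_shift
    {m d : ℕ}
    (M : Fin m → Matrix (Fin d) (Fin d) ℂ)
    (hpsd : ∀ x, (M x).PosSemidef) (hsum : ∑ x, M x = 1)
    (K : Fin m → Fin m → Matrix (Fin d) (Fin d) ℂ) (hK : IsDecomp M K)
    (a b : Fin m) (hab : a ≠ b) (c : ℝ) (hc : 0 < c)
    (hpos : (K a b - (c : ℂ) • (1 : Matrix (Fin d) (Fin d) ℂ)).PosSemidef) :
    let K' : Fin m → Fin m → Matrix (Fin d) (Fin d) ℂ := fun x j =>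
      if x = a ∧ j = b then K a b - (c : ℂ) • (1 : Matrix (Fin d) (Fin d) ℂ)
      else if x = a ∧ j = a then K a a + (c : ℂ) • (1 : Matrix (Fin d) (Fin d) ℂ)
      else K x j
    IsDecomp M K' ∧
      ∀ φ : Fin d → ℂ, star φ ⬝ᵥ φ = 1 → objective K' φ = objective K φ + c :=
  improve_decomposition_identity_shift_general M K hK a b hab c hc hpos
end
end

section
/- Let M be an m-outcome POVM in dimension d, let K be a valid decomposition of M, let a ≠ b be indices in Fin m, and let X be a positive semidefinite matrix such that K a b − X and K b a − X are both positive semidefinite. Define K̃ to agree with K except K̃ a a = K a a + X, K̃ b b = K b b + X, K̃ a b = K a b − X, and K̃ b a = K b a − X. Then K̃ is a valid decomposition of M, and for every unit vector φ ∈ ℂ^d the objective satisfies ∑_j ⟪φ, (K̃ j j)·φ⟫ = ∑_j ⟪φ, (K j j)·φ⟫ + 2·⟪φ, X·φ⟫ ≥ ∑_j ⟪φ, (K j j)·φ⟫. -/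
open Matrix ComplexOrder

noncomputable section

/-!
Moving `X` from the two off-diagonal blocks `(a, b)`, `(b, a)` to the diagonal blocks `(a, a)`,
`(b, b)` adds to `K` the block pattern `D x j = (v x * v j) • X` with `v = e_a - e_b`. Since
`∑ v = 0`, every row and column of `D` sums to zero, so the marginal and trace constraints of a
decomposition are untouched. The objective only sees the diagonal, where `D` contributes `∑ v j ^ 2 = 2` copies of `X`.
-/

section Decomp

variable {m d : ℕ}

theorem objective_add (K D : Fin m → Fin m → Matrix (Fin d) (Fin d) ℂ) (φ : Fin d → ℂ) :
    objective (K + D) φ = objective K φ + objective D φ := by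
  simp only [objective, Pi.add_apply, add_mulVec, dotProduct_add, Complex.add_re,
    Finset.sum_add_distrib]

theorem objective_smul_mul (v : Fin m → ℤ) (X : Matrix (Fin d) (Fin d) ℂ)
    (φ : Fin d → ℂ) :
    objective (fun x j => (v x * v j) • X) φ
      = (∑ j, v j * v j : ℤ) * (star φ ⬝ᵥ X.mulVec φ).re := by
  simp only [objective, smul_mulVec, dotProduct_smul, Complex.re_zsmul]
  simp only [zsmul_eq_mul, Int.cast_sum, Int.cast_mul, Finset.sum_mul]

theorem IsDecomp.add_of_sum_eq_zero {M : Fin m → Matrix (Fin d) (Fin d) ℂ}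
    {K D : Fin m → Fin m → Matrix (Fin d) (Fin d) ℂ} (hK : IsDecomp M K)
    (hpos : ∀ x j, (K x j + D x j).PosSemidef)
    (hcol : ∀ j, ∑ x, D x j = 0) (hrow : ∀ x, ∑ j, D x j = 0) :
    IsDecomp M (K + D) := by
  obtain ⟨-, hK_trace, hK_marg⟩ := hK
  refine ⟨hpos, fun j => ?_, fun x => ?_⟩
  · have htrace : ∑ x, (D x j).trace = 0 := by rw [← trace_sum, hcol, trace_zero]
    simpa only [Pi.add_apply, Finset.sum_add_distrib, trace_add, hcol, htrace, add_zero]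
      using hK_trace j
  · simpa only [Pi.add_apply, Finset.sum_add_distrib, hrow, add_zero] using hK_marg x

end Decomp

section Pattern

variable {ι E : Type*} [Fintype ι] [AddCommGroup E] {v : ι → ℤ} (X : E)

theorem sum_smul_mul_right_eq_zero (hv : ∑ j, v j = 0) (x : ι) :
    ∑ j, (v x * v j) • X = 0 := by
  rw [← Finset.sum_smul, ← Finset.mul_sum, hv, mul_zero, zero_smul]

theorem sum_smul_mul_left_eq_zero (hv : ∑ x, v x = 0) (j : ι) :
    ∑ x, (v x * v j) • X = 0 := by
  simp_rw [mul_comm (v _) (v j)]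
  exact sum_smul_mul_right_eq_zero X hv j

variable [DecidableEq ι]

theorem sum_single_sub_single (a b : ι) :
    ∑ j, (Pi.single a 1 - Pi.single b 1 : ι → ℤ) j = 0 := by
  simp

theorem sum_sq_single_sub_single {a b : ι} (hab : a ≠ b) :
    ∑ j, (Pi.single a 1 - Pi.single b 1 : ι → ℤ) j
      * (Pi.single a 1 - Pi.single b 1 : ι → ℤ) j = 2 := by
  simp [mul_sub, Finset.sum_sub_distrib, Pi.single_apply, hab, hab.symm]

end Pattern

theorem improve_decomposition_X_shift_general
    {m d : ℕ}
    (M : Fin m → Matrix (Fin d) (Fin d) ℂ)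
    (K : Fin m → Fin m → Matrix (Fin d) (Fin d) ℂ) (hK : IsDecomp M K)
    (a b : Fin m) (hab : a ≠ b)
    (X : Matrix (Fin d) (Fin d) ℂ) (hX : X.PosSemidef)
    (hab' : (K a b - X).PosSemidef) (hba' : (K b a - X).PosSemidef) :
    let Kt : Fin m → Fin m → Matrix (Fin d) (Fin d) ℂ := fun x j =>
      if x = a ∧ j = a then K a a + X
      else if x = b ∧ j = b then K b b + X
      else if x = a ∧ j = b then K a b - X
      else if x = b ∧ j = a then K b a - X
      else K x j
    IsDecomp M Kt ∧
      ∀ φ : Fin d → ℂ, star φ ⬝ᵥ φ = 1 →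
        objective Kt φ = objective K φ + 2 * (star φ ⬝ᵥ X.mulVec φ).re ∧
        objective K φ ≤ objective Kt φ := by
  intro Kt
  set v : Fin m → ℤ := Pi.single a 1 - Pi.single b 1
  have hKt : Kt = K + fun x j => (v x * v j) • X := by
    funext x j
    simp only [Kt, v, Pi.add_apply, Pi.sub_apply, Pi.single_apply]
    split_ifs <;> simp_all [sub_eq_add_neg, eq_comm]
  have hobj (φ : Fin d → ℂ) :
      objective Kt φ = objective K φ + 2 * (star φ ⬝ᵥ X.mulVec φ).re := by
    rw [hKt, objective_add, objective_smul_mul, sum_sq_single_sub_single hab]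
    norm_num
  have hpos : ∀ x j, (Kt x j).PosSemidef := by
    intro x j
    simp only [Kt]
    split_ifs
    exacts [(hK.1 a a).add hX, (hK.1 b b).add hX, hab', hba', hK.1 x j]
  refine ⟨?_, fun φ _ => ⟨hobj φ, ?_⟩⟩
  · rw [hKt] at hpos ⊢
    exact hK.add_of_sum_eq_zero hpos
      (sum_smul_mul_left_eq_zero X (sum_single_sub_single a b))
      (sum_smul_mul_right_eq_zero X (sum_single_sub_single a b))
  · have hXφ : 0 ≤ (star φ ⬝ᵥ X.mulVec φ).re :=
      Complex.nonneg_iff.mp (hX.dotProduct_mulVec_nonneg φ) |>.1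
    rw [hobj]
    linarith

/-- **Sublemma 1**: if `X ≥ 0` with `K a b − X ≥ 0` and `K b a − X ≥ 0` for some `a ≠ b`,
then moving `X` from the off-diagonal elements to the diagonal ones yields a valid
decomposition whose objective at every unit state `φ` is larger by `2⟪φ, X φ⟫ ≥ 0`. -/
theorem improve_decomposition_X_shift
    {m d : ℕ}
    (M : Fin m → Matrix (Fin d) (Fin d) ℂ)
    (hpsd : ∀ x, (M x).PosSemidef) (hsum : ∑ x, M x = 1)
    (K : Fin m → Fin m → Matrix (Fin d) (Fin d) ℂ) (hK : IsDecomp M K)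
    (a b : Fin m) (hab : a ≠ b)
    (X : Matrix (Fin d) (Fin d) ℂ) (hX : X.PosSemidef)
    (hab' : (K a b - X).PosSemidef) (hba' : (K b a - X).PosSemidef) :
    let Kt : Fin m → Fin m → Matrix (Fin d) (Fin d) ℂ := fun x j =>
      if x = a ∧ j = a then K a a + X
      else if x = b ∧ j = b then K b b + X
      else if x = a ∧ j = b then K a b - X
      else if x = b ∧ j = a then K b a - X
      else K x j
    IsDecomp M Kt ∧
      ∀ φ : Fin d → ℂ, star φ ⬝ᵥ φ = 1 →
        objective Kt φ = objective K φ + 2 * (star φ ⬝ᵥ X.mulVec φ).re ∧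
        objective K φ ≤ objective Kt φ :=
  improve_decomposition_X_shift_general M K hK a b hab X hX hab' hba'
end
end

section
/- Let 0 < ε < 1 and d ≥ 2, let M be the noisy projective measurement in dimension d, let ψ = (1/√d)·(1,…,1) ∈ ℂ^d be the unbiased state, and let K be a valid decomposition of M. For a permutation σ of Fin d let P_σ denote the associated permutation matrix (so that P_σᵀ · M (σ x) · P_σ = M x for all x). Define the permutation-averaged family K^σ by K^σ x j = (1/d!) • ∑_{σ ∈ Equiv.Perm (Fin d)} P_σᵀ · (K (σ x) (σ j)) · P_σ. Then K^σ is a valid decomposition of M, and its objective at ψ equals that of K: ∑_x ⟪ψ, (K^σ x x)·ψ⟫ = ∑_x ⟪ψ, (K x x)·ψ⟫. -/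
open Matrix ComplexOrder

noncomputable section

/-! Conjugation by `P σ` relabels a decomposition `K` into `(x, j) ↦ K (σ x) (σ j)` with rows and
columns permuted by `σ`. The noisy projective measurement is permutation covariant, so each
relabelled family is again a valid decomposition of it, and the unbiased state is permutation
invariant, so each has the same objective. Validity is preserved under averaging and the
objective is linear, so both facts pass to the average over all permutations. -/

section Permutation

variable {l n R : Type*}

lemma Equiv.Perm.permMatrix_inv_apply [DecidableEq n] [Zero R] [One R] (σ : Equiv.Perm n)
    (i j : n) : σ⁻¹.permMatrix R i j = if i = σ j then 1 else 0 := by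
  simp only [PEquiv.toMatrix_apply, Equiv.Perm.permMatrix, Equiv.toPEquiv_apply, Option.mem_def,
    Option.some.injEq, Equiv.Perm.inv_eq_iff_eq, @eq_comm _ i]

lemma Matrix.transpose_permMatrix_inv_mul_mul [Fintype n] [DecidableEq n] [NonAssocSemiring R]
    (σ : Equiv.Perm n) (A : Matrix n n R) :
    (σ⁻¹.permMatrix R)ᵀ * A * σ⁻¹.permMatrix R = A.submatrix σ σ := by
  rw [transpose_permMatrix, inv_inv, PEquiv.toMatrix_toPEquiv_mul, PEquiv.mul_toMatrix_toPEquiv]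
  rfl

lemma Matrix.sum_submatrix [AddCommMonoid R] {ι : Type*} (s : Finset ι) (A : ι → Matrix n n R)
    (e₁ e₂ : l → n) : ∑ i ∈ s, (A i).submatrix e₁ e₂ = (∑ i ∈ s, A i).submatrix e₁ e₂ := by
  ext
  simp only [sum_apply, submatrix_apply]

lemma Matrix.trace_submatrix_equiv [Fintype l] [Fintype n] [AddCommMonoid R] (A : Matrix n n R)
    (e : l ≃ n) : (A.submatrix e e).trace = A.trace :=
  e.sum_comp fun i => A i i

end Permutation

lemma noisyM_submatrix {d : ℕ} (ε : ℝ) (σ : Equiv.Perm (Fin d)) (x : Fin d) :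
    (noisyM d ε (σ x)).submatrix σ σ = noisyM d ε x := by
  simp only [noisyM, submatrix_add, submatrix_smul, Pi.add_apply, Pi.smul_apply,
    submatrix_one_equiv, submatrix_single_equiv, Equiv.symm_apply_apply]

section Decomposition

variable {m d : ℕ}

def relabel (τ : Equiv.Perm (Fin m)) (σ : Equiv.Perm (Fin d))
    (K : Fin m → Fin m → Matrix (Fin d) (Fin d) ℂ) : Fin m → Fin m → Matrix (Fin d) (Fin d) ℂ :=
  fun x j => (K (τ x) (τ j)).submatrix σ σ

def average {ι : Type*} [Fintype ι] (K : ι → Fin m → Fin m → Matrix (Fin d) (Fin d) ℂ) :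
    Fin m → Fin m → Matrix (Fin d) (Fin d) ℂ :=
  fun x j => (Fintype.card ι : ℂ)⁻¹ • ∑ i, K i x j

lemma isDecomp_relabel {M : Fin m → Matrix (Fin d) (Fin d) ℂ}
    {K : Fin m → Fin m → Matrix (Fin d) (Fin d) ℂ} (hK : IsDecomp M K)
    (τ : Equiv.Perm (Fin m)) (σ : Equiv.Perm (Fin d)) :
    IsDecomp (fun x => (M (τ x)).submatrix σ σ) (relabel τ σ K) := by
  obtain ⟨hpsd, hnorm, hsum⟩ := hK
  refine ⟨fun x j => (hpsd _ _).submatrix σ, fun j => ?_, fun x => ?_⟩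
  · calc (d : ℂ) • ∑ x, (K (τ x) (τ j)).submatrix σ σ
        = ((d : ℂ) • ∑ x, K x (τ j)).submatrix σ σ := by
          rw [sum_submatrix, Equiv.sum_comp τ fun x => K x (τ j)]; rfl
      _ = (∑ x, (K (τ x) (τ j)).trace) • (1 : Matrix (Fin d) (Fin d) ℂ) := by
          rw [hnorm, Equiv.sum_comp τ fun x => (K x (τ j)).trace]
          exact congrArg ((_ : ℂ) • ·) (submatrix_one_equiv (α := ℂ) σ)
      _ = (∑ x, ((K (τ x) (τ j)).submatrix σ σ).trace) • 1 := by
          simp only [trace_submatrix_equiv]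
  · simp only [relabel, sum_submatrix, Equiv.sum_comp τ (K (τ x)), hsum]

lemma isDecomp_average {ι : Type*} [Fintype ι] [Nonempty ι] {M : Fin m → Matrix (Fin d) (Fin d) ℂ}
    {K : ι → Fin m → Fin m → Matrix (Fin d) (Fin d) ℂ} (hK : ∀ i, IsDecomp M (K i)) :
    IsDecomp M (average K) := by
  set c : ℂ := (Fintype.card ι : ℂ)⁻¹
  refine ⟨fun x j => ?_, fun j => ?_, fun x => ?_⟩
  · exact (posSemidef_sum _ fun i _ => (hK i).1 x j).smul (by positivity)
  · calc (d : ℂ) • ∑ x, c • ∑ i, K i x j = c • ∑ i, (d : ℂ) • ∑ x, K i x j := by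
          rw [← Finset.smul_sum, Finset.sum_comm, smul_comm, Finset.smul_sum]
      _ = c • ∑ i, (∑ x, (K i x j).trace) • (1 : Matrix (Fin d) (Fin d) ℂ) := by
          simp only [(hK _).2.1 j]
      _ = (∑ x, (c • ∑ i, K i x j).trace) • 1 := by
          rw [← Finset.sum_smul, smul_smul, Finset.sum_comm]
          simp only [trace_smul, trace_sum, smul_eq_mul, Finset.mul_sum]
  · have hcard : (Fintype.card ι : ℂ) ≠ 0 := Nat.cast_ne_zero.2 Fintype.card_ne_zero
    simp only [average]
    rw [← Finset.smul_sum, Finset.sum_comm]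
    simp only [(hK _).2.2, Finset.sum_const, Finset.card_univ, ← Nat.cast_smul_eq_nsmul ℂ,
      smul_smul, inv_mul_cancel₀ hcard, one_smul]

lemma objective_relabel (τ : Equiv.Perm (Fin m)) (σ : Equiv.Perm (Fin d))
    (K : Fin m → Fin m → Matrix (Fin d) (Fin d) ℂ) {φ : Fin d → ℂ} (hφ : φ ∘ σ = φ) :
    objective (relabel τ σ K) φ = objective K φ := by
  have hφ_symm : φ ∘ σ.symm = φ := (σ.comp_symm_eq φ φ).2 hφ.symm
  have hdot (v : Fin d → ℂ) : star φ ⬝ᵥ v ∘ σ = star φ ⬝ᵥ v := by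
    conv_lhs => rw [← hφ]
    exact comp_equiv_dotProduct_comp_equiv (star φ) v σ
  simp only [objective, relabel, submatrix_mulVec_equiv, hφ_symm, hdot]
  exact Equiv.sum_comp τ fun x => (star φ ⬝ᵥ K x x *ᵥ φ).re

lemma objective_average {ι : Type*} [Fintype ι] (K : ι → Fin m → Fin m → Matrix (Fin d) (Fin d) ℂ)
    (φ : Fin d → ℂ) : objective (average K) φ = (Fintype.card ι : ℝ)⁻¹ * ∑ i, objective (K i) φ := by
  have hc : (Fintype.card ι : ℂ)⁻¹ = ((Fintype.card ι : ℝ)⁻¹ : ℝ) := by push_cast; rfl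
  simp only [objective, average, hc, smul_mulVec, sum_mulVec, dotProduct_smul,
    dotProduct_sum, smul_eq_mul, Complex.re_ofReal_mul, Complex.re_sum, Finset.mul_sum]
  exact Finset.sum_comm

end Decomposition

theorem noisy_projective_permutation_averaging_general
    {d : ℕ} (ε : ℝ)
    (K : Fin d → Fin d → Matrix (Fin d) (Fin d) ℂ) (hK : IsDecomp (noisyM d ε) K) :
    let P : Equiv.Perm (Fin d) → Matrix (Fin d) (Fin d) ℂ :=
      fun σ i j => if i = σ j then 1 else 0
    let Kσ : Fin d → Fin d → Matrix (Fin d) (Fin d) ℂ := fun x j =>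
      ((d.factorial : ℂ))⁻¹ • ∑ σ : Equiv.Perm (Fin d), (P σ)ᵀ * K (σ x) (σ j) * P σ
    let ψ : Fin d → ℂ := fun _ => ((Real.sqrt d : ℂ))⁻¹
    (∀ σ x, (P σ)ᵀ * noisyM d ε (σ x) * P σ = noisyM d ε x) ∧
    IsDecomp (noisyM d ε) Kσ ∧
    ∑ x, (star ψ ⬝ᵥ (Kσ x x).mulVec ψ).re = ∑ x, (star ψ ⬝ᵥ (K x x).mulVec ψ).re := by
  intro P Kσ ψ
  have hconj (σ : Equiv.Perm (Fin d)) (A : Matrix (Fin d) (Fin d) ℂ) :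
      (P σ)ᵀ * A * P σ = A.submatrix σ σ := by
    have hP : P σ = σ⁻¹.permMatrix ℂ := funext₂ fun i j => (σ.permMatrix_inv_apply i j).symm
    rw [hP, transpose_permMatrix_inv_mul_mul]
  have hKσ : Kσ = average fun σ => relabel σ σ K := by
    funext x j
    simp only [Kσ, average, relabel, hconj, Fintype.card_perm, Fintype.card_fin]
  have hrelabel (σ : Equiv.Perm (Fin d)) : IsDecomp (noisyM d ε) (relabel σ σ K) := by
    simpa only [noisyM_submatrix] using isDecomp_relabel hK σ σ
  refine ⟨fun σ x => by rw [hconj, noisyM_submatrix], hKσ ▸ isDecomp_average hrelabel, ?_⟩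
  change objective Kσ ψ = objective K ψ
  rw [hKσ, objective_average]
  simp only [objective_relabel _ _ K (rfl : ψ ∘ _ = ψ), Finset.sum_const, Finset.card_univ,
    nsmul_eq_mul]
  exact inv_mul_cancel_left₀ (Nat.cast_ne_zero.2 Fintype.card_ne_zero) _

/-- Permutation averaging: averaging a valid decomposition of the noisy projective
measurement over all simultaneous permutations yields a valid decomposition with the same
objective at the unbiased state `ψ`. The permutation matrices satisfy
`P_σᵀ · M (σ x) · P_σ = M x`. -/
theorem noisy_projective_permutation_averaging
    {d : ℕ} (hd : 2 ≤ d) (ε : ℝ) (hε0 : 0 < ε) (hε1 : ε < 1)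
    (K : Fin d → Fin d → Matrix (Fin d) (Fin d) ℂ) (hK : IsDecomp (noisyM d ε) K) :
    let P : Equiv.Perm (Fin d) → Matrix (Fin d) (Fin d) ℂ :=
      fun σ i j => if i = σ j then 1 else 0
    let Kσ : Fin d → Fin d → Matrix (Fin d) (Fin d) ℂ := fun x j =>
      ((d.factorial : ℂ))⁻¹ • ∑ σ : Equiv.Perm (Fin d), (P σ)ᵀ * K (σ x) (σ j) * P σ
    let ψ : Fin d → ℂ := fun _ => ((Real.sqrt d : ℂ))⁻¹
    (∀ σ x, (P σ)ᵀ * noisyM d ε (σ x) * P σ = noisyM d ε x) ∧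
    IsDecomp (noisyM d ε) Kσ ∧
    ∑ x, (star ψ ⬝ᵥ (Kσ x x).mulVec ψ).re = ∑ x, (star ψ ⬝ᵥ (K x x).mulVec ψ).re :=
  noisy_projective_permutation_averaging_general ε K hK
end
end

section
/- For every natural number d > 2 and every real ε with 0 < ε < 1, one has (1/d)·(2·√(d − ε·(d−1)) + √ε·(d−2)) < √(2 − ε). (Consequently, coarse-graining Eve's optimal attack on the d-dimensional noisy projective measurement yields a strictly suboptimal guessing probability (1/2) + (√ε/(2d))·(2√(d−ε(d−1)) + √ε·(d−2)) < (1/2)·(1 + √(ε(2−ε))).) -/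
/-! The left-hand side is the mean of `√(d − ε(d−1))` and `√ε` with weights `2/d` and `(d−2)/d`,
and the same mean of the radicands is exactly `2 − ε`. Since `d − ε(d−1) − ε = d(1 − ε) > 0`,
the two radicands differ, so strict concavity of `√` gives the strict inequality. -/

theorem Real.one_div_mul_two_mul_sqrt_add_sqrt_mul_lt_sqrt {x ε : ℝ} (hx : 2 < x)
    (hε0 : 0 < ε) (hε1 : ε < 1) :
    1 / x * (2 * √(x - ε * (x - 1)) + √ε * (x - 2)) < √(2 - ε) := by
  have hx0 : 0 < x := by linarith
  have hgap : ε < x - ε * (x - 1) := by nlinarith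
  have jensen := Real.strictConcaveOn_sqrt.2 (Set.mem_Ici.2 (hε0.trans hgap).le)
    (Set.mem_Ici.2 hε0.le) hgap.ne' (div_pos two_pos hx0) (div_pos (sub_pos.2 hx) hx0)
    (by field_simp; ring)
  have hmean : 2 / x * (x - ε * (x - 1)) + (x - 2) / x * ε = 2 - ε := by
    field_simp
    ring
  rw [smul_eq_mul, smul_eq_mul, smul_eq_mul, smul_eq_mul, hmean] at jensen
  calc 1 / x * (2 * √(x - ε * (x - 1)) + √ε * (x - 2))
      = 2 / x * √(x - ε * (x - 1)) + (x - 2) / x * √ε := by ring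
    _ < √(2 - ε) := jensen

/-- Coarse-graining Eve's optimal attack is strictly suboptimal: for every natural `d > 2`
and every `0 < ε < 1`,
`(1/d)·(2√(d − ε(d−1)) + √ε·(d−2)) < √(2 − ε)`. -/
theorem coarse_grained_attack_suboptimal
    (d : ℕ) (hd : 2 < d) (ε : ℝ) (hε0 : 0 < ε) (hε1 : ε < 1) :
    (1 / (d : ℝ)) *
        (2 * Real.sqrt ((d : ℝ) - ε * ((d : ℝ) - 1)) + Real.sqrt ε * ((d : ℝ) - 2))
      < Real.sqrt (2 - ε) :=
  Real.one_div_mul_two_mul_sqrt_add_sqrt_mul_lt_sqrt (by exact_mod_cast hd) hε0 hε1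
end

section
/- Let 0 < ε < 1 and d ≥ 2, let M be the noisy projective measurement in dimension d, let ψ = (1/√d)·(1,…,1) ∈ ℂ^d be the unbiased state, and let K be the square-root decomposition of M at ψ, i.e. K x x = √(M x)·|ψ⟩⟨ψ|·√(M x) + (ε/d)·(c_{≠x}·𝟙_{≠x} − 𝟙_{≠x}·|ψ⟩⟨ψ|·𝟙_{≠x}) with 𝟙_{≠x} = 1 − stdBasisMatrix x x 1 and c_{≠x} = (d−1)/d, and K x j = |v_{x,j}⟩⟨v_{x,j}| with v_{x,j} = √(M x)·(ψ_j·e_x − ψ_x·e_j) for x ≠ j. Then with A = d − (d−1)·ε one has ⟪ψ, (K x x)·ψ⟫ = (1/d³)·(√A + (d−1)·√ε)² for every x, and ⟪ψ, (K x j)·ψ⟫ = (1/d³)·(√A − √ε)² for every x ≠ j. -/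
open Matrix ComplexOrder

noncomputable section

/-!
Both `√(M x)` and `𝟙_{≠x}` are diagonal in the standard basis, so against the constant vector `ψ`
every quantity reduces to `(1/d)` times a sum of diagonal entries. A rank-one sandwich gives
`⟪ψ, S |ψ⟩⟨ψ| S ψ⟫ = ⟪ψ, S ψ⟫²` and `⟪ψ, |v⟩⟨v| ψ⟫ = |⟪ψ, v⟫|²`; the correction term of `K x x`
vanishes because `c_{≠x} = ⟪ψ, 𝟙_{≠x} ψ⟫`.
-/

namespace Matrix

variable {n R : Type*}

theorem dotProduct_vecMulVec_mulVec [Fintype n] [CommSemiring R] (w u u' z : n → R) :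
    w ⬝ᵥ vecMulVec u u' *ᵥ z = (w ⬝ᵥ u) * (u' ⬝ᵥ z) := by
  rw [dotProduct_mulVec, vecMul_vecMulVec, smul_dotProduct, smul_eq_mul]

theorem dotProduct_mul_vecMulVec_mul_mulVec [Fintype n] [CommSemiring R] (w u u' z : n → R)
    (S T : Matrix n n R) :
    w ⬝ᵥ (S * vecMulVec u u' * T) *ᵥ z = (w ⬝ᵥ S *ᵥ u) * (u' ⬝ᵥ T *ᵥ z) := by
  rw [← mulVec_mulVec, ← mulVec_mulVec, dotProduct_mulVec w S, dotProduct_vecMulVec_mulVec,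
    ← dotProduct_mulVec]

variable [DecidableEq n]

theorem smul_single_add_smul_one_sub_single [Ring R] (x : n) (a b : R) :
    a • single x x 1 + b • (1 - single x x 1) = diagonal (fun k => if k = x then a else b) := by
  rw [← diagonal_single, ← diagonal_one, diagonal_sub, ← diagonal_smul, ← diagonal_smul,
    diagonal_add]
  congr 1
  ext k
  by_cases hk : k = x <;> simp [hk]

theorem one_sub_single_eq_diagonal [Ring R] (x : n) :
    1 - single x x (1 : R) = diagonal (fun k => if k = x then 0 else 1) := by
  simpa using smul_single_add_smul_one_sub_single x (0 : R) 1

end Matrix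

theorem Complex.star_dotProduct_vecMulVec_star_mulVec {n : Type*} [Fintype n] (ψ v : n → ℂ) :
    star ψ ⬝ᵥ vecMulVec v (star v) *ᵥ ψ = Complex.normSq (star ψ ⬝ᵥ v) := by
  rw [dotProduct_vecMulVec_mulVec, star_dotProduct v ψ, Complex.star_def, Complex.mul_conj]

theorem Fintype.sum_ite_eq_add_card_sub_one_mul {n R : Type*} [Fintype n] [DecidableEq n] [Ring R]
    (x : n) (a b : R) :
    ∑ k, (if k = x then a else b) = a + (Fintype.card n - 1) * b := by
  rw [← Finset.add_sum_erase _ _ (Finset.mem_univ x), if_pos rfl,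
    Finset.sum_congr rfl fun k hk => if_neg (Finset.ne_of_mem_erase hk), Finset.sum_const,
    Finset.card_erase_of_mem (Finset.mem_univ x), Finset.card_univ, nsmul_eq_mul,
    Nat.cast_pred (Fintype.card_pos_iff.mpr ⟨x⟩)]

theorem sqrtNoisyM_eq_diagonal (d : ℕ) (ε : ℝ) (x : Fin d) :
    sqrtNoisyM d ε x = diagonal (fun k => if k = x
      then ((Real.sqrt (((d : ℝ) - ((d : ℝ) - 1) * ε) / d) : ℝ) : ℂ)
      else ((Real.sqrt (ε / d) : ℝ) : ℂ)) :=
  smul_single_add_smul_one_sub_single x _ _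

def unbiasedState (d : ℕ) : Fin d → ℂ := fun _ => ((Real.sqrt d : ℂ))⁻¹

section unbiasedState

variable {d : ℕ}

theorem star_unbiasedState : star (unbiasedState d) = unbiasedState d := by
  ext
  simp [unbiasedState, ← Complex.ofReal_inv]

theorem unbiasedState_mul_unbiasedState (i j : Fin d) :
    unbiasedState d i * unbiasedState d j = (d : ℂ)⁻¹ := by
  simp only [unbiasedState]
  rw [← mul_inv, ← Complex.ofReal_mul, Real.mul_self_sqrt d.cast_nonneg, Complex.ofReal_natCast]

theorem unbiasedState_dotProduct_diagonal_ite_mulVec (x : Fin d) (a b : ℂ) :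
    star (unbiasedState d) ⬝ᵥ diagonal (fun k => if k = x then a else b) *ᵥ unbiasedState d
      = (a + (d - 1) * b) / d := by
  simp only [star_unbiasedState, dotProduct, mulVec_diagonal]
  rw [Finset.sum_congr rfl fun k _ => by rw [mul_left_comm, unbiasedState_mul_unbiasedState],
    ← Finset.sum_mul, Fintype.sum_ite_eq_add_card_sub_one_mul, Fintype.card_fin, div_eq_mul_inv]

theorem unbiasedState_dotProduct_diagonal_mulVec_sub_single (f : Fin d → ℂ) (x j : Fin d) :
    star (unbiasedState d) ⬝ᵥ diagonal f *ᵥ (fun k => unbiasedState d j * (if k = x then 1 else 0)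
      - unbiasedState d x * (if k = j then 1 else 0)) = (f x - f j) / d := by
  simp only [star_unbiasedState, dotProduct, mulVec_diagonal, mul_sub, mul_ite, mul_one, mul_zero,
    Finset.sum_sub_distrib, Finset.sum_ite_eq', Finset.mem_univ, if_true]
  rw [mul_left_comm, unbiasedState_mul_unbiasedState, mul_left_comm (unbiasedState d j),
    unbiasedState_mul_unbiasedState]
  ring

theorem unbiasedState_dotProduct_sqrtNoisyM_mulVec (ε : ℝ) (x : Fin d) :
    star (unbiasedState d) ⬝ᵥ sqrtNoisyM d ε x *ᵥ unbiasedState d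
      = (((Real.sqrt (((d : ℝ) - ((d : ℝ) - 1) * ε) / d) + ((d : ℝ) - 1) * Real.sqrt (ε / d))
          / d : ℝ) : ℂ) := by
  rw [sqrtNoisyM_eq_diagonal, unbiasedState_dotProduct_diagonal_ite_mulVec]
  push_cast
  ring

theorem unbiasedState_dotProduct_one_sub_single_mulVec (x : Fin d) :
    star (unbiasedState d) ⬝ᵥ (1 - single x x 1) *ᵥ unbiasedState d
      = ((((d : ℝ) - 1) / d : ℝ) : ℂ) := by
  rw [one_sub_single_eq_diagonal, unbiasedState_dotProduct_diagonal_ite_mulVec]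
  push_cast
  ring

theorem unbiasedState_dotProduct_sqrtNoisyM_mulVec_sub_single (ε : ℝ) {x j : Fin d}
    (hxj : x ≠ j) :
    star (unbiasedState d) ⬝ᵥ sqrtNoisyM d ε x *ᵥ (fun k =>
      unbiasedState d j * (if k = x then 1 else 0) - unbiasedState d x * (if k = j then 1 else 0))
      = (((Real.sqrt (((d : ℝ) - ((d : ℝ) - 1) * ε) / d) - Real.sqrt (ε / d)) / d : ℝ) : ℂ) := by
  rw [sqrtNoisyM_eq_diagonal, unbiasedState_dotProduct_diagonal_mulVec_sub_single, if_pos rfl,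
    if_neg hxj.symm]
  norm_cast

end unbiasedState

theorem sq_div_sqrt_div (u : ℝ) {d : ℝ} (hd : 0 ≤ d) : (u / √d / d) ^ 2 = 1 / d ^ 3 * u ^ 2 := by
  rw [div_pow, div_pow, Real.sq_sqrt hd]
  ring

theorem square_root_decomposition_unbiased_values_general
    {d : ℕ} (ε : ℝ) :
    let ψ : Fin d → ℂ := fun _ => ((Real.sqrt d : ℂ))⁻¹
    let S : Fin d → Matrix (Fin d) (Fin d) ℂ := sqrtNoisyM d ε
    let oneNe : Fin d → Matrix (Fin d) (Fin d) ℂ := fun x => 1 - Matrix.single x x 1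
    let Kdiag : Fin d → Matrix (Fin d) (Fin d) ℂ := fun x =>
      S x * vecMulVec ψ (star ψ) * S x
        + ((ε / d : ℝ) : ℂ) • (((((d : ℝ) - 1) / d : ℝ) : ℂ) • oneNe x
            - oneNe x * vecMulVec ψ (star ψ) * oneNe x)
    let v : Fin d → Fin d → (Fin d → ℂ) := fun x j =>
      (S x).mulVec (fun k => ψ j * (if k = x then 1 else 0) - ψ x * (if k = j then 1 else 0))
    let A : ℝ := (d : ℝ) - ((d : ℝ) - 1) * ε
    (∀ x, (star ψ ⬝ᵥ (Kdiag x).mulVec ψ).re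
        = (1 / (d : ℝ) ^ 3) * (Real.sqrt A + ((d : ℝ) - 1) * Real.sqrt ε) ^ 2) ∧
    (∀ x j, x ≠ j →
      (star ψ ⬝ᵥ (vecMulVec (v x j) (star (v x j))).mulVec ψ).re
        = (1 / (d : ℝ) ^ 3) * (Real.sqrt A - Real.sqrt ε) ^ 2) := by
  intro ψ S oneNe Kdiag v A
  have hψ : ψ = unbiasedState d := rfl
  have hA : Real.sqrt (A / d) = Real.sqrt A / Real.sqrt d := Real.sqrt_div' A d.cast_nonneg
  have hε : Real.sqrt (ε / d) = Real.sqrt ε / Real.sqrt d := Real.sqrt_div' ε d.cast_nonneg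
  refine ⟨fun x => ?_, fun x j hxj => ?_⟩
  · have hK : star ψ ⬝ᵥ Kdiag x *ᵥ ψ
        = ((((Real.sqrt (A / d) + ((d : ℝ) - 1) * Real.sqrt (ε / d)) / d) ^ 2 : ℝ) : ℂ) := by
      simp only [Kdiag, hψ, add_mulVec, smul_mulVec, sub_mulVec, dotProduct_add, dotProduct_smul,
        dotProduct_sub, dotProduct_mul_vecMulVec_mul_mulVec, smul_eq_mul]
      simp only [S, oneNe, unbiasedState_dotProduct_sqrtNoisyM_mulVec,
        unbiasedState_dotProduct_one_sub_single_mulVec]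
      push_cast
      ring
    rw [hK, Complex.ofReal_re, hA, hε, ← sq_div_sqrt_div _ d.cast_nonneg]
    ring
  · simp only [Complex.star_dotProduct_vecMulVec_star_mulVec, v, S, hψ,
      unbiasedState_dotProduct_sqrtNoisyM_mulVec_sub_single ε hxj, Complex.ofReal_re,
      Complex.normSq_ofReal]
    rw [← sq, hA, hε, ← sub_div, sq_div_sqrt_div _ d.cast_nonneg]

/-- For the square-root decomposition of the noisy projective measurement at the unbiased
state `ψ`, with `A = d − (d−1)ε` one has `⟪ψ, K_{x,x} ψ⟫ = (1/d³)(√A + (d−1)√ε)²` and, for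
`x ≠ j`, `⟪ψ, K_{x,j} ψ⟫ = (1/d³)(√A − √ε)²`. -/
theorem square_root_decomposition_unbiased_values
    {d : ℕ} (hd : 2 ≤ d) (ε : ℝ) (hε0 : 0 < ε) (hε1 : ε < 1) :
    let ψ : Fin d → ℂ := fun _ => ((Real.sqrt d : ℂ))⁻¹
    let S : Fin d → Matrix (Fin d) (Fin d) ℂ := sqrtNoisyM d ε
    let oneNe : Fin d → Matrix (Fin d) (Fin d) ℂ := fun x => 1 - Matrix.single x x 1
    let Kdiag : Fin d → Matrix (Fin d) (Fin d) ℂ := fun x =>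
      S x * vecMulVec ψ (star ψ) * S x
        + ((ε / d : ℝ) : ℂ) • (((((d : ℝ) - 1) / d : ℝ) : ℂ) • oneNe x
            - oneNe x * vecMulVec ψ (star ψ) * oneNe x)
    let v : Fin d → Fin d → (Fin d → ℂ) := fun x j =>
      (S x).mulVec (fun k => ψ j * (if k = x then 1 else 0) - ψ x * (if k = j then 1 else 0))
    let A : ℝ := (d : ℝ) - ((d : ℝ) - 1) * ε
    (∀ x, (star ψ ⬝ᵥ (Kdiag x).mulVec ψ).re
        = (1 / (d : ℝ) ^ 3) * (Real.sqrt A + ((d : ℝ) - 1) * Real.sqrt ε) ^ 2) ∧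
    (∀ x j, x ≠ j →
      (star ψ ⬝ᵥ (vecMulVec (v x j) (star (v x j))).mulVec ψ).re
        = (1 / (d : ℝ) ^ 3) * (Real.sqrt A - Real.sqrt ε) ^ 2) :=
  square_root_decomposition_unbiased_values_general ε
end
end
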